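/- arXiv:2605.09531 — 7 statements merged into one kernel-verified Lean document; each statement's English description precedes it below -/
import Mathlib

section
/- The ternary quadratic form Q₃(x,y,z) = x² + y² + 3z² is an ADC form: for every integer n, if there exist rational numbers x, y, z with x² + y² + 3z² = n, then there exist integers x, y, z with x² + y² + 3z² = n. -/
/-!
Davenport–Cassels descent, modified at the prime 2. Suppose `Q₃(a) = n d²` with `d > 1` odd.
Approximate `a / d` by an integral point `t` with `Q₃(a - d t) = d E` even and `< 2 d²`: centre the
last two coordinates of `a - d t` modulo `d`, and choose the first one in `[-d, d]` of the parity
making `Q₃(a - d t)` even. If `E = 0` then `t` represents `n`. Otherwise the line through `a / d`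
and `t` meets the quadric `Q₃ = n` again at a point of denominator `E = 2k` with `0 < k < d`, and
since `Q₃` represents `N` whenever it represents `4N`, it represents `n k²`. Even denominators are
halved in the same way.
-/

open Set QuadraticMap

namespace QuadraticMap

variable {R M : Type*} [CommRing R] [AddCommGroup M] [Module R M] (Q : QuadraticMap R M R)

theorem map_sub_smul (a t : M) (d : R) :
    Q (a - d • t) = Q a - d * polar Q a t + d ^ 2 * Q t := by
  rw [sub_eq_add_neg, QuadraticMap.map_add Q, ← neg_smul, QuadraticMap.map_smul,
    polar_smul_right, smul_eq_mul, smul_eq_mul]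
  ring

/-- The line through `a / d` and `t` meets the quadric `Q = n` again at `v / E`, where
`d * E = Q (a - d • t)` by `map_sub_smul`. -/
theorem map_second_intersection {a : M} {n d : R} (h : Q a = n * d ^ 2) (t : M) :
    Q ((Q t - n) • a + (2 * n * d - polar Q a t) • t) =
      n * (n * d - polar Q a t + d * Q t) ^ 2 := by
  rw [QuadraticMap.map_add Q, QuadraticMap.map_smul, QuadraticMap.map_smul, polar_smul_left,
    polar_smul_right, h]
  simp only [smul_eq_mul]
  ring

end QuadraticMap

theorem Int.sq_emod_four_eq_emod_two (x : ℤ) : x ^ 2 % 4 = x % 2 := by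
  rcases Int.even_or_odd' x with ⟨k, rfl | rfl⟩ <;> ring_nf <;> omega

theorem Int.exists_two_mul_abs_sub_mul_lt (x : ℤ) {d : ℕ} (hd : Odd d) :
    ∃ q : ℤ, 2 * |x - d * q| < d := by
  refine ⟨x.bdiv d, ?_⟩
  have h₁ := Int.le_bmod (x := x) hd.pos
  have h₂ := Int.bmod_lt (x := x) hd.pos
  rw [Int.bmod_eq_self_sub_mul_bdiv] at h₁ h₂
  obtain ⟨k, rfl⟩ := hd
  cases abs_cases (x - (2 * k + 1 : ℕ) * x.bdiv (2 * k + 1)) <;> omega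

theorem Int.exists_abs_sub_mul_le_even_add (x p : ℤ) {d : ℕ} (hd : Odd d) :
    ∃ q : ℤ, |x - d * q| ≤ d ∧ Even (x - d * q + p) := by
  have hd₀ : (0 : ℤ) < d := by exact_mod_cast hd.pos
  have h₀ := Int.emod_nonneg x hd₀.ne'
  have h₁ := Int.emod_lt_of_pos x hd₀
  have h₂ : x - d * (x / d) = x % d := (Int.emod_def x d).symm
  have hd₂ : (d : ℤ) % 2 = 1 := by exact_mod_cast Nat.odd_iff.mp hd
  simp only [Int.even_iff]
  rcases Int.emod_two_eq (x % d + p) with h | h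
  · exact ⟨x / d, by rw [h₂, abs_of_nonneg h₀]; omega⟩
  · refine ⟨x / d + 1, ?_⟩
    rw [show x - d * (x / d + 1) = x % d - d by linarith, abs_of_neg (by omega)]
    omega

/-- Multiplication by the Eisenstein units `(1 ± √-3) / 2`:
`(b ∓ 3c)² + 3(b ± c)² = 4(b² + 3c²)`. -/
theorem exists_sq_add_three_mul_sq_of_four_mul {b c M : ℤ} (h : b ^ 2 + 3 * c ^ 2 = 4 * M) :
    ∃ x y : ℤ, x ^ 2 + 3 * y ^ 2 = M := by
  have hb := Int.sq_emod_four_eq_emod_two b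
  have hc := Int.sq_emod_four_eq_emod_two c
  rcases Int.emod_two_eq c with hc₂ | hc₂
  · obtain ⟨b', rfl⟩ : 2 ∣ b := by omega
    obtain ⟨c', rfl⟩ : 2 ∣ c := by omega
    exact ⟨b', c', by linarith⟩
  · obtain ⟨k, hk⟩ | ⟨k, hk⟩ : (4 : ℤ) ∣ b + c ∨ (4 : ℤ) ∣ b - c := by omega
    · obtain rfl : b = 4 * k - c := by omega
      exact ⟨k - c, k, by linarith⟩
    · obtain rfl : b = 4 * k + c := by omega
      exact ⟨k + c, k, by linarith⟩

def Q3 : QuadraticMap ℤ (Fin 3 → ℤ) ℤ := weightedSumSquares ℤ (![1, 1, 3] : Fin 3 → ℤ)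

theorem Q3_apply (v : Fin 3 → ℤ) : Q3 v = v 0 ^ 2 + v 1 ^ 2 + 3 * v 2 ^ 2 := by
  simp only [Q3, weightedSumSquares_apply, Fin.sum_univ_three, smul_eq_mul, Matrix.cons_val]
  ring

theorem Q3_vecCons (x y z : ℤ) : Q3 ![x, y, z] = x ^ 2 + y ^ 2 + 3 * z ^ 2 :=
  Q3_apply _

theorem Q3_nonneg (v : Fin 3 → ℤ) : 0 ≤ Q3 v := by
  rw [Q3_apply]
  positivity

theorem eq_zero_of_Q3_eq_zero {v : Fin 3 → ℤ} (h : Q3 v = 0) : v = 0 := by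
  rw [Q3_apply] at h
  have h₀ : v 0 = 0 := by nlinarith [sq_nonneg (v 0), sq_nonneg (v 1), sq_nonneg (v 2)]
  have h₁ : v 1 = 0 := by nlinarith [sq_nonneg (v 0), sq_nonneg (v 1), sq_nonneg (v 2)]
  have h₂ : v 2 = 0 := by nlinarith [sq_nonneg (v 0), sq_nonneg (v 1), sq_nonneg (v 2)]
  ext i
  fin_cases i <;> assumption

theorem mem_range_Q3_of_four_mul_mem {N : ℤ} (h : 4 * N ∈ range Q3) : N ∈ range Q3 := by
  obtain ⟨v, hv⟩ := h
  rw [Q3_apply] at hv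
  have h₀ := Int.sq_emod_four_eq_emod_two (v 0)
  have h₁ := Int.sq_emod_four_eq_emod_two (v 1)
  have h₂ := Int.sq_emod_four_eq_emod_two (v 2)
  obtain ⟨a, ha⟩ | ⟨a, ha⟩ : (2 : ℤ) ∣ v 0 ∨ (2 : ℤ) ∣ v 1 := by omega
  · obtain ⟨x, y, hxy⟩ := exists_sq_add_three_mul_sq_of_four_mul
      (show v 1 ^ 2 + 3 * v 2 ^ 2 = 4 * (N - a ^ 2) by rw [ha] at hv; linarith)
    exact ⟨![a, x, y], by rw [Q3_vecCons]; linarith⟩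
  · obtain ⟨x, y, hxy⟩ := exists_sq_add_three_mul_sq_of_four_mul
      (show v 0 ^ 2 + 3 * v 2 ^ 2 = 4 * (N - a ^ 2) by rw [ha] at hv; linarith)
    exact ⟨![a, x, y], by rw [Q3_vecCons]; linarith⟩

theorem exists_Q3_sub_smul_even_lt (a : Fin 3 → ℤ) {d : ℕ} (hd : Odd d) :
    ∃ t : Fin 3 → ℤ, Even (Q3 (a - (d : ℤ) • t)) ∧ Q3 (a - (d : ℤ) • t) < 2 * d ^ 2 := by
  obtain ⟨q₁, h₁⟩ := Int.exists_two_mul_abs_sub_mul_lt (a 1) hd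
  obtain ⟨q₂, h₂⟩ := Int.exists_two_mul_abs_sub_mul_lt (a 2) hd
  obtain ⟨q₀, h₀, hpar⟩ :=
    Int.exists_abs_sub_mul_le_even_add (a 0) (a 1 - d * q₁ + (a 2 - d * q₂)) hd
  refine ⟨![q₀, q₁, q₂], ?_⟩
  simp only [Q3_apply, Matrix.smul_cons, Int.zsmul_eq_mul, Matrix.smul_empty, Pi.sub_apply,
    Matrix.cons_val]
  generalize a 0 - d * q₀ = r₀ at *
  generalize a 1 - d * q₁ = r₁ at *
  generalize a 2 - d * q₂ = r₂ at *
  constructor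
  · have := Int.sq_emod_four_eq_emod_two r₀
    have := Int.sq_emod_four_eq_emod_two r₁
    have := Int.sq_emod_four_eq_emod_two r₂
    rw [Int.even_iff] at hpar ⊢
    omega
  · have s₀ := sq_le_sq' (abs_le.mp h₀).1 (abs_le.mp h₀).2
    nlinarith [sq_abs r₁, sq_abs r₂, abs_nonneg r₁, abs_nonneg r₂]

theorem exists_lt_mul_sq_mem_range_Q3 {n : ℤ} {d : ℕ} (hd : Odd d) (hd₁ : 1 < d)
    (h : n * d ^ 2 ∈ range Q3) : ∃ e : ℕ, 0 < e ∧ e < d ∧ n * e ^ 2 ∈ range Q3 := by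
  obtain ⟨a, ha⟩ := h
  obtain ⟨t, heven, hlt⟩ := exists_Q3_sub_smul_even_lt a hd
  set E := n * d - polar Q3 a t + d * Q3 t with hE
  have hdE : Q3 (a - (d : ℤ) • t) = d * E := by rw [map_sub_smul, ha]; ring
  have hd₀ : (0 : ℤ) < d := by exact_mod_cast hd.pos
  rcases (Q3_nonneg (a - (d : ℤ) • t)).eq_or_lt with h0 | hpos
  · refine ⟨1, one_pos, hd₁, t, ?_⟩
    have hat : a = (d : ℤ) • t := sub_eq_zero.mp (eq_zero_of_Q3_eq_zero h0.symm)
    rw [hat, QuadraticMap.map_smul, smul_eq_mul] at ha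
    have hd₂ : (d : ℤ) ^ 2 ≠ 0 := by positivity
    exact mul_left_cancel₀ hd₂ (by push_cast; linarith)
  · have hE₀ : 0 < E := pos_of_mul_pos_right (hdE ▸ hpos) hd₀.le
    have hE₂ : E < 2 * d := by nlinarith
    obtain ⟨k, hk⟩ : Even E := (Int.even_mul.mp (hdE ▸ heven)).resolve_left
      (by exact_mod_cast Nat.not_even_iff_odd.mpr hd)
    lift k to ℕ using (by omega)
    refine ⟨k, by omega, by omega, mem_range_Q3_of_four_mul_mem
      ⟨(Q3 t - n) • a + (2 * n * d - polar Q3 a t) • t, ?_⟩⟩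
    rw [map_second_intersection Q3 ha, ← hE, hk]
    ring

theorem mem_range_Q3_of_mul_sq_mem {n : ℤ} {D : ℕ} (hD : 0 < D) (h : n * D ^ 2 ∈ range Q3) :
    n ∈ range Q3 := by
  induction D using Nat.strong_induction_on with
  | _ D ih =>
  rcases Nat.even_or_odd' D with ⟨k, rfl | rfl⟩
  · exact ih k (by omega) (by omega)
      (mem_range_Q3_of_four_mul_mem (by convert h using 1; push_cast; ring))
  · rcases k.eq_zero_or_pos with rfl | hk
    · simpa using h
    · obtain ⟨e, he₀, hed, he⟩ :=
        exists_lt_mul_sq_mem_range_Q3 (odd_two_mul_add_one k) (by omega) h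
      exact ih e hed he₀ he

theorem exists_mul_sq_mem_range_Q3 {n : ℤ} {x y z : ℚ} (h : x ^ 2 + y ^ 2 + 3 * z ^ 2 = n) :
    ∃ D : ℕ, 0 < D ∧ n * D ^ 2 ∈ range Q3 := by
  refine ⟨x.den * y.den * z.den, by positivity,
    ![x.num * y.den * z.den, x.den * y.num * z.den, x.den * y.den * z.num], ?_⟩
  rw [Q3_vecCons, ← Int.cast_inj (α := ℚ)]
  push_cast
  rw [← x.mul_den_eq_num, ← y.mul_den_eq_num, ← z.mul_den_eq_num]
  linear_combination ((x.den : ℚ) * y.den * z.den) ^ 2 * h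

/-- The ternary quadratic form `Q₃(x,y,z) = x² + y² + 3z²` is an ADC form: any integer
represented by `Q₃` over the rationals is represented by `Q₃` over the integers. -/
theorem Q3_is_ADC (n : ℤ) (h : ∃ x y z : ℚ, x ^ 2 + y ^ 2 + 3 * z ^ 2 = (n : ℚ)) :
    ∃ x y z : ℤ, x ^ 2 + y ^ 2 + 3 * z ^ 2 = n := by
  obtain ⟨x, y, z, h⟩ := h
  obtain ⟨D, hD, hnD⟩ := exists_mul_sq_mem_range_Q3 h
  obtain ⟨v, hv⟩ := mem_range_Q3_of_mul_sq_mem hD hnD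
  exact ⟨v 0, v 1, v 2, by rw [← hv, Q3_apply]⟩
end

section
/- The ternary quadratic form G(x,y,z) = x² + 3y² + 3z² is an ADC form: for every integer n, if there exist rational numbers x, y, z with x² + 3y² + 3z² = n, then there exist integers x, y, z with x² + 3y² + 3z² = n. -/
/-!
Over `ℚ`, `G(x, y, z) = n` gives `E(x + 3y, 2x, 3z) = 3n` for the form
`E(u, v, w) = u² - uv + v² + w²`, the Eisenstein norm form plus a square. `E` is positive
definite and Euclidean: every rational point lies at `E`-distance at most `11/16 < 1` from an
integral one. The Davenport–Cassels descent (replace a rational solution by the second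
intersection of the quadric with the line through it and a nearest integral point; its
denominator is smaller) then yields an integral solution of `E = 3n`. Since
`E ≡ (u + v)² + w² (mod 3)`, both `u + v` and `w` are divisible by `3`, and dividing out leaves
`n = a² - ab + b² + 3z²`. Finally `a² - ab + b²` is always of the form `x² + 3y²`, because one
of `a`, `b`, `a - b` is even.
-/

namespace QuadraticMap

variable {M : Type*} [AddCommGroup M]

/-- The integral form of "every point of `ℚ ⊗ M` lies at `Q`-distance less than `1` from `M`",
applied to the point `x / d`. -/
def IsEuclidean (Q : QuadraticMap ℤ M ℤ) : Prop :=
  ∀ (x : M) (d : ℤ), 0 < d → ∃ y : M, Q (x - d • y) < d ^ 2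

lemma map_smul_add_smul (Q : QuadraticMap ℤ M ℤ) (a b : ℤ) (x y : M) :
    Q (a • x + b • y) = a ^ 2 * Q x + a * b * polar Q x y + b ^ 2 * Q y := by
  rw [QuadraticMap.map_add Q, Q.map_smul, Q.map_smul, polar_smul_left, polar_smul_right]
  simp only [smul_eq_mul]
  ring

theorem IsEuclidean.exists_eq_of_eq_mul_sq {Q : QuadraticMap ℤ M ℤ} (hE : Q.IsEuclidean)
    (hQ : Q.PosDef) {m d : ℤ} {x : M} (hd : 0 < d) (h : Q x = m * d ^ 2) :
    ∃ y, Q y = m := by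
  induction hn : d.toNat using Nat.strong_induction_on generalizing d x with
  | _ n ih =>
  obtain ⟨y, hy⟩ := hE x d hd
  set a := x - d • y with ha
  have hx : x = d • y + (1 : ℤ) • a := by rw [one_smul, ha, add_sub_cancel]
  rw [hx, map_smul_add_smul] at h
  by_cases ha0 : a = 0
  · refine ⟨y, mul_right_cancel₀ (pow_ne_zero 2 hd.ne') ?_⟩
    rw [ha0, map_zero, polar_zero_right] at h
    linear_combination h
  set e := m * d - d * Q y - polar Q y a with he
  have hQa : Q a = d * e := by rw [he]; linear_combination h
  have he_pos : 0 < e := pos_of_mul_pos_right (hQa ▸ hQ a ha0) hd.le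
  have he_lt : e < d := lt_of_mul_lt_mul_left (by rw [← hQa, ← pow_two]; exact hy) hd.le
  -- `(e • y + (Q y - m) • a) / e` is the second intersection of the line through `x / d` and `y`
  -- with the quadric `Q = m`.
  refine ih e.toNat (by omega) he_pos (x := e • y + (Q y - m) • a) ?_ rfl
  rw [map_smul_add_smul]
  linear_combination (Q y - m) ^ 2 * hQa - e * (Q y - m) * he

end QuadraticMap

lemma Int.exists_abs_two_mul_sub_mul_sub_le (u c : ℤ) {d : ℤ} (hd : 0 < d) :
    ∃ r : ℤ, |2 * (u - d * r) - c| ≤ d := by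
  refine ⟨(2 * u - c + d) / (2 * d), abs_le.2 ⟨?_, ?_⟩⟩ <;>
  linarith [Int.emod_nonneg (2 * u - c + d) (by omega : 2 * d ≠ 0),
    Int.emod_lt_of_pos (2 * u - c + d) (by omega : 0 < 2 * d),
    Int.mul_ediv_add_emod (2 * u - c + d) (2 * d)]

lemma Rat.exists_pos_nat_mul_eq_intCast {ι : Type*} [Fintype ι] (q : ι → ℚ) :
    ∃ d : ℕ, 0 < d ∧ ∃ v : ι → ℤ, ∀ i, (v i : ℚ) = d * q i := by
  refine ⟨∏ i, (q i).den, Finset.prod_pos fun i _ ↦ (q i).pos, ?_⟩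
  choose k hk using fun i ↦ Finset.dvd_prod_of_mem (fun j ↦ (q j).den) (Finset.mem_univ i)
  refine ⟨fun i ↦ (q i).num * k i, fun i ↦ ?_⟩
  rw [hk i]
  push_cast
  rw [← Rat.mul_den_eq_num]
  ring

lemma Int.three_dvd_of_three_dvd_sq_add_sq {a b : ℤ} (h : 3 ∣ a ^ 2 + b ^ 2) :
    3 ∣ a ∧ 3 ∣ b := by
  have hmod3 : ∀ x y : ZMod 3, x ^ 2 + y ^ 2 = 0 → x = 0 ∧ y = 0 := by decide
  have h3 := (ZMod.intCast_zmod_eq_zero_iff_dvd (a ^ 2 + b ^ 2) 3).2 (by exact_mod_cast h)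
  push_cast at h3
  simpa only [ZMod.intCast_zmod_eq_zero_iff_dvd, Nat.cast_ofNat] using hmod3 a b h3

lemma Int.exists_sq_add_three_mul_sq_eq (a b : ℤ) :
    ∃ x y : ℤ, x ^ 2 + 3 * y ^ 2 = a ^ 2 - a * b + b ^ 2 := by
  rcases Int.even_or_odd a with ⟨p, rfl⟩ | ha
  · exact ⟨b - p, p, by ring⟩
  rcases Int.even_or_odd b with ⟨p, rfl⟩ | hb
  · exact ⟨a - p, p, by ring⟩
  obtain ⟨p, hp⟩ := ha.sub_odd hb
  exact ⟨a - p, p, by linear_combination (b - 2 * p) * hp⟩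

def eisensteinAddSqForm : QuadraticForm ℤ (Fin 3 → ℤ) :=
  Matrix.toQuadraticForm' !![1, -1, 0; 0, 1, 0; 0, 0, 1]

lemma eisensteinAddSqForm_apply (v : Fin 3 → ℤ) :
    eisensteinAddSqForm v = v 0 ^ 2 - v 0 * v 1 + v 1 ^ 2 + v 2 ^ 2 := by
  simp only [eisensteinAddSqForm, Matrix.toQuadraticForm', Int.reduceNeg,
    LinearMap.BilinMap.toQuadraticMap_apply, Matrix.toLinearMap₂'_apply', dotProduct,
    Matrix.mulVec, Matrix.of_apply, Matrix.cons_val', Matrix.cons_val_fin_one,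
    Fin.sum_univ_three, Fin.isValue, Matrix.cons_val_zero, Matrix.cons_val_one, Matrix.cons_val,
    one_mul, neg_mul, zero_mul, add_zero, zero_add]
  ring

lemma four_mul_eisensteinAddSqForm_apply (v : Fin 3 → ℤ) :
    4 * eisensteinAddSqForm v = (2 * v 0 - v 1) ^ 2 + 3 * v 1 ^ 2 + 4 * v 2 ^ 2 := by
  rw [eisensteinAddSqForm_apply]
  ring

lemma eisensteinAddSqForm_posDef : eisensteinAddSqForm.PosDef := by
  intro v hv
  have h4 := four_mul_eisensteinAddSqForm_apply v
  by_contra! hle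
  apply hv
  have h1 : v 1 = 0 := by nlinarith [sq_nonneg (2 * v 0 - v 1), sq_nonneg (v 2)]
  have h2 : v 2 = 0 := by nlinarith [sq_nonneg (2 * v 0 - v 1), sq_nonneg (v 1)]
  have h0 : v 0 = 0 := by nlinarith [sq_nonneg (v 1), sq_nonneg (v 2)]
  ext i
  fin_cases i <;> assumption

lemma eisensteinAddSqForm_isEuclidean : eisensteinAddSqForm.IsEuclidean := by
  intro x d hd
  obtain ⟨s, hs⟩ := Int.exists_abs_two_mul_sub_mul_sub_le (x 1) 0 hd
  obtain ⟨r, hr⟩ := Int.exists_abs_two_mul_sub_mul_sub_le (x 0) (x 1 - d * s) hd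
  obtain ⟨t, ht⟩ := Int.exists_abs_two_mul_sub_mul_sub_le (x 2) 0 hd
  refine ⟨![r, s, t], lt_of_mul_lt_mul_left ?_ (by norm_num : (0 : ℤ) ≤ 4)⟩
  rw [four_mul_eisensteinAddSqForm_apply]
  simp only [Matrix.smul_cons, Int.zsmul_eq_mul, Matrix.smul_empty, Fin.isValue, Pi.sub_apply,
    Matrix.cons_val_zero, Matrix.cons_val_one, Matrix.cons_val]
  rw [sub_zero] at hs ht
  nlinarith [abs_le.1 hs, abs_le.1 hr, abs_le.1 ht]

lemma exists_sq_add_three_mul_sq_add_three_mul_sq_of_eisensteinAddSqForm_eq {n : ℤ}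
    {v : Fin 3 → ℤ} (h : eisensteinAddSqForm v = 3 * n) :
    ∃ x y z : ℤ, x ^ 2 + 3 * y ^ 2 + 3 * z ^ 2 = n := by
  rw [eisensteinAddSqForm_apply] at h
  obtain ⟨⟨g, hg⟩, ⟨z, hz⟩⟩ := Int.three_dvd_of_three_dvd_sq_add_sq (a := v 0 + v 1) (b := v 2)
    ⟨n + v 0 * v 1, by linear_combination h⟩
  obtain ⟨x, y, hxy⟩ := Int.exists_sq_add_three_mul_sq_eq (v 0 - g) g
  rw [eq_sub_of_add_eq' hg, hz] at h
  exact ⟨x, y, z, mul_left_cancel₀ three_ne_zero (by linear_combination 3 * hxy + h)⟩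

/-- The ternary quadratic form `G(x,y,z) = x² + 3y² + 3z²` is an ADC form: any integer
represented by `G` over the rationals is represented by `G` over the integers. -/
theorem G_is_ADC (n : ℤ) (h : ∃ x y z : ℚ, x ^ 2 + 3 * y ^ 2 + 3 * z ^ 2 = (n : ℚ)) :
    ∃ x y z : ℤ, x ^ 2 + 3 * y ^ 2 + 3 * z ^ 2 = n := by
  obtain ⟨x, y, z, h⟩ := h
  obtain ⟨d, hd, v, hv⟩ := Rat.exists_pos_nat_mul_eq_intCast ![x, y, z]
  have hG : v 0 ^ 2 + 3 * v 1 ^ 2 + 3 * v 2 ^ 2 = n * (d : ℤ) ^ 2 := by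
    have hGℚ : (v 0 : ℚ) ^ 2 + 3 * (v 1 : ℚ) ^ 2 + 3 * (v 2 : ℚ) ^ 2 = n * (d : ℚ) ^ 2 := by
      rw [hv 0, hv 1, hv 2]
      simp only [Fin.isValue, Matrix.cons_val_zero, Matrix.cons_val_one, Matrix.cons_val]
      linear_combination (d : ℚ) ^ 2 * h
    exact_mod_cast hGℚ
  have hE : eisensteinAddSqForm ![v 0 + 3 * v 1, 2 * v 0, 3 * v 2] = 3 * n * (d : ℤ) ^ 2 := by
    rw [eisensteinAddSqForm_apply]
    simp only [Fin.isValue, Matrix.cons_val_zero, Matrix.cons_val_one, Matrix.cons_val]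
    linear_combination 3 * hG
  obtain ⟨w, hw⟩ := eisensteinAddSqForm_isEuclidean.exists_eq_of_eq_mul_sq
    eisensteinAddSqForm_posDef (by positivity) hE
  exact exists_sq_add_three_mul_sq_add_three_mul_sq_of_eisensteinAddSqForm_eq hw
end

section
/- For every integer k with k ≡ 7 (mod 8), the following are equivalent: (1) there exist integers x, y, z with x² + 3y² + 3z² = k; (2) there exist odd integers x, y, z with x² + 3y² + 3z² = k. -/
/-!
Squares are `0, 1, 4 (mod 8)`, with the odd squares exactly those `≡ 1`. Reducing
`x² + 3y² + 3z² ≡ 7 (mod 8)` shows that `y` and `z` cannot both be even, and that for an odd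
coordinate, say `z`, the remaining binary part satisfies `x² + 3y² ≡ 4 (mod 8)`. Such a value of
`x² + 3y²` with `x = 2a`, `y = 2b` even is `4(a² + 3b²)` with `a² + 3b²` odd, and the identity
`(a - 3b)² + 3(a + b)² = 4(a² + 3b²)` represents it with both coordinates odd.
-/

lemma Int.sq_emod_four_ne_three (x : ℤ) : x ^ 2 % 4 ≠ 3 := by
  rcases Int.even_or_odd x with ⟨d, rfl⟩ | hx
  · have : (d + d) ^ 2 = 4 * d ^ 2 := by ring
    omega
  · rw [Int.sq_mod_four_eq_one_of_odd hx]
    decide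

lemma Even.four_dvd_sq {x : ℤ} (hx : Even x) : 4 ∣ x ^ 2 := by
  obtain ⟨d, rfl⟩ := hx
  exact ⟨d ^ 2, by ring⟩

theorem exists_odd_odd_sq_add_three_mul_sq_eq {x y : ℤ} (h : (x ^ 2 + 3 * y ^ 2) % 8 = 4) :
    ∃ a b : ℤ, Odd a ∧ Odd b ∧ a ^ 2 + 3 * b ^ 2 = x ^ 2 + 3 * y ^ 2 := by
  have hxy : Even (x ^ 2 + 3 * y ^ 2) := Int.even_iff.mpr (by omega)
  have h3 : ¬Even (3 : ℤ) := by decide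
  by_cases hx : Even x
  · have hy : Even y := by simpa [parity_simps, hx, h3] using hxy
    obtain ⟨a, rfl⟩ := hx
    obtain ⟨b, rfl⟩ := hy
    have hab : Odd (a + b) := by
      have h4 : (a + a) ^ 2 + 3 * (b + b) ^ 2 = 4 * (a ^ 2 + 3 * b ^ 2) := by ring
      have : Odd (a ^ 2 + 3 * b ^ 2) := Int.odd_iff.mpr (by omega)
      simpa [parity_simps, h3] using this
    refine ⟨a - 3 * b, a + b, ?_, hab, by ring⟩
    rw [show a - 3 * b = a + b - 2 * (2 * b) by ring]
    exact hab.sub_even (even_two_mul _)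
  · have hy : Odd y := by simpa [parity_simps, hx, h3] using hxy
    exact ⟨x, y, Int.not_even_iff_odd.mp hx, hy, rfl⟩

/-- For an integer `k ≡ 7 (mod 8)`, `k` is represented by `G(x,y,z) = x² + 3y² + 3z²`
over ℤ if and only if it is represented with all three coordinates odd. -/
theorem G_represents_iff_odd_representation (k : ℤ) (hk : k ≡ 7 [ZMOD 8]) :
    (∃ x y z : ℤ, x ^ 2 + 3 * y ^ 2 + 3 * z ^ 2 = k) ↔
      (∃ x y z : ℤ, Odd x ∧ Odd y ∧ Odd z ∧ x ^ 2 + 3 * y ^ 2 + 3 * z ^ 2 = k) := by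
  refine ⟨fun ⟨x, y, z, h⟩ => ?_, fun ⟨x, y, z, _, _, _, h⟩ => ⟨x, y, z, h⟩⟩
  have hk8 : k % 8 = 7 := hk
  by_cases hz : Odd z
  · have := Int.eight_dvd_sq_sub_one_of_odd hz
    obtain ⟨a, b, ha, hb, hab⟩ := exists_odd_odd_sq_add_three_mul_sq_eq (x := x) (y := y) (by omega)
    exact ⟨a, b, z, ha, hb, hz, by rw [hab, h]⟩
  · have hy : Odd y := by
      by_contra hy
      have := (Int.not_odd_iff_even.mp hy).four_dvd_sq
      have := (Int.not_odd_iff_even.mp hz).four_dvd_sq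
      have := Int.sq_emod_four_ne_three x
      omega
    have := Int.eight_dvd_sq_sub_one_of_odd hy
    obtain ⟨a, b, ha, hb, hab⟩ := exists_odd_odd_sq_add_three_mul_sq_eq (x := x) (y := z) (by omega)
    exact ⟨a, y, b, ha, hy, hb, by linarith⟩
end

section
/- For all integers a, b, c, d not all zero, F(a, b, c, d) ≥ 8 and F(a, b, c, d) ≡ 0 or 2 (mod 6). In particular, every value of F on a primitive integer vector lies in the Hassett subset ℋ. -/
/-!
Writing `s = a + b + c + d`, one has `F = 2 s² + 6 k` for an integral quadratic form `k`, so
`F ≡ 2 s² (mod 6)`, and `s² ≡ 0, 1 (mod 3)`. For the lower bound, a sum-of-squares certificate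
gives `F ≥ 2 (a² + b² + c² + d²)`, which settles every vector of squared length at least `4`;
the remaining nonzero vectors have entries in `{-1, 0, 1}` and are checked one by one.
-/

/-- The quaternary form `F(x,y,z,u) = 4(2x²+2y²+2z²−2xy−2xz+yz) + 2u(4u−x−y−z)`
over the integers. -/
def Fform (x y z u : ℤ) : ℤ :=
  4 * (2 * x ^ 2 + 2 * y ^ 2 + 2 * z ^ 2 - 2 * x * y - 2 * x * z + y * z) +
    2 * u * (4 * u - x - y - z)

lemma Int.sq_emod_three (s : ℤ) : s ^ 2 % 3 = 0 ∨ s ^ 2 % 3 = 1 := by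
  rcases (by omega : s % 3 = 0 ∨ s % 3 = 1 ∨ s % 3 = 2) with h | h | h <;>
    simp [pow_two, Int.mul_emod, h]

lemma Fform_eq (a b c d : ℤ) :
    Fform a b c d = 2 * (a + b + c + d) ^ 2 +
      6 * (a ^ 2 + b ^ 2 + c ^ 2 + d ^ 2 - 2 * a * b - 2 * a * c - a * d - b * d - c * d) := by
  unfold Fform; ring

lemma Fform_emod_six (a b c d : ℤ) : Fform a b c d % 6 = 0 ∨ Fform a b c d % 6 = 2 := by
  have := Int.sq_emod_three (a + b + c + d)
  rw [Fform_eq]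
  omega

lemma two_mul_sum_sq_le_Fform (a b c d : ℤ) :
    2 * (a ^ 2 + b ^ 2 + c ^ 2 + d ^ 2) ≤ Fform a b c d := by
  unfold Fform
  nlinarith [sq_nonneg (6 * a - 4 * b - 4 * c - d), sq_nonneg (10 * b - 2 * c - 5 * d),
    sq_nonneg (8 * c - 5 * d), sq_nonneg d]

lemma eight_le_Fform_of_abs_le_one {a b c d : ℤ} (ha : |a| ≤ 1) (hb : |b| ≤ 1) (hc : |c| ≤ 1)
    (hd : |d| ≤ 1) (h : ¬(a = 0 ∧ b = 0 ∧ c = 0 ∧ d = 0)) : 8 ≤ Fform a b c d := by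
  rw [abs_le] at ha hb hc hd
  obtain ⟨ha₁, ha₂⟩ := ha
  obtain ⟨hb₁, hb₂⟩ := hb
  obtain ⟨hc₁, hc₂⟩ := hc
  obtain ⟨hd₁, hd₂⟩ := hd
  interval_cases a <;> interval_cases b <;> interval_cases c <;> interval_cases d <;>
    revert h <;> decide

lemma eight_le_Fform {a b c d : ℤ} (h : ¬(a = 0 ∧ b = 0 ∧ c = 0 ∧ d = 0)) :
    8 ≤ Fform a b c d := by
  by_cases hlarge : 4 ≤ a ^ 2 + b ^ 2 + c ^ 2 + d ^ 2
  · linarith [two_mul_sum_sq_le_Fform a b c d]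
  have hsmall : ∀ x : ℤ, x ^ 2 < 4 → |x| ≤ 1 := fun x hx => by
    have := abs_lt_of_sq_lt_sq (by linarith : x ^ 2 < 2 ^ 2) zero_le_two
    omega
  apply eight_le_Fform_of_abs_le_one _ _ _ _ h <;> apply hsmall <;>
    nlinarith [sq_nonneg a, sq_nonneg b, sq_nonneg c, sq_nonneg d]

/-- On any nonzero integer vector, `F` takes a value lying in the Hassett subset:
`F(a,b,c,d) ≥ 8` and `F(a,b,c,d) ≡ 0` or `2 (mod 6)`. -/
theorem Fform_value_in_Hassett (a b c d : ℤ) (h : ¬(a = 0 ∧ b = 0 ∧ c = 0 ∧ d = 0)) :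
    8 ≤ Fform a b c d ∧ (Fform a b c d % 6 = 0 ∨ Fform a b c d % 6 = 2) :=
  ⟨eight_le_Fform h, Fform_emod_six a b c d⟩
end

section
/- For every positive integer k with k ≡ 7 (mod 8), k ≡ 0 or 1 (mod 3), and k ≢ 0 (mod 9), there exist odd integers x, y, z with x² + 3y² + 3z² = k. -/
/-- Binary quadratic form value. -/
def Bval (b c w y z : ℤ) : ℤ := b*y^2 + c*z^2 + 2*w*y*z

lemma Bval_smul (b c w g y z : ℤ) : Bval b c w (g*y) (g*z) = g^2 * Bval b c w y z := by
  unfold Bval; ring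

/-- nonzero values of a positive definite binary form attain a positive minimum,
at a primitive vector. -/
lemma bin_exists_min (b c w : ℤ)
    (hpos : ∀ y z : ℤ, ¬(y = 0 ∧ z = 0) → 0 < Bval b c w y z) :
    ∃ (k : ℤ) (y₀ z₀ : ℤ), ¬(y₀ = 0 ∧ z₀ = 0) ∧ Int.gcd y₀ z₀ = 1 ∧
      Bval b c w y₀ z₀ = k ∧ 0 < k ∧
      ∀ y z : ℤ, ¬(y = 0 ∧ z = 0) → k ≤ Bval b c w y z := by
  classical
  set S : Set ℕ := {n | ∃ y z : ℤ, ¬(y = 0 ∧ z = 0) ∧ Bval b c w y z = n} with hS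
  have hne : S.Nonempty := by
    refine ⟨(Bval b c w 1 0).toNat, 1, 0, by simp, ?_⟩
    have := hpos 1 0 (by simp)
    omega
  obtain ⟨y₁, z₁, hnz, hval⟩ := Nat.sInf_mem hne
  have hmin : ∀ y z : ℤ, ¬(y = 0 ∧ z = 0) → ((sInf S : ℕ) : ℤ) ≤ Bval b c w y z := by
    intro y z h
    have h0 := hpos y z h
    have : (Bval b c w y z).toNat ∈ S := ⟨y, z, h, by omega⟩
    have := Nat.sInf_le this
    omega
  have hkpos : 0 < ((sInf S : ℕ) : ℤ) := by
    have := hpos y₁ z₁ hnz; omega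
  -- primitivity
  set g : ℕ := Int.gcd y₁ z₁ with hg
  have hgdvd1 : (g : ℤ) ∣ y₁ := Int.gcd_dvd_left _ _
  have hgdvd2 : (g : ℤ) ∣ z₁ := Int.gcd_dvd_right _ _
  obtain ⟨y₂, hy₂⟩ := hgdvd1
  obtain ⟨z₂, hz₂⟩ := hgdvd2
  have hgne : g ≠ 0 := by
    intro h
    rw [h] at hy₂ hz₂; simp at hy₂ hz₂
    exact hnz ⟨hy₂, hz₂⟩
  have hnz2 : ¬(y₂ = 0 ∧ z₂ = 0) := by
    rintro ⟨rfl, rfl⟩; simp at hy₂ hz₂; exact hnz ⟨hy₂, hz₂⟩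
  have hval2 : Bval b c w y₁ z₁ = (g:ℤ)^2 * Bval b c w y₂ z₂ := by
    rw [hy₂, hz₂, Bval_smul]
  have hg1 : g = 1 := by
    by_contra hne1
    have hg2 : (2:ℤ) ≤ (g:ℤ) := by omega
    have h1 : ((sInf S : ℕ) : ℤ) ≤ Bval b c w y₂ z₂ := hmin _ _ hnz2
    have h2 : 0 < Bval b c w y₂ z₂ := hpos _ _ hnz2
    have key : ((sInf S : ℕ) : ℤ) = (g:ℤ)^2 * Bval b c w y₂ z₂ := by rw [← hval2, hval]
    have hg4 : (4:ℤ) ≤ (g:ℤ)^2 := by nlinarith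
    nlinarith [key, h1, h2, hg4]
  refine ⟨((sInf S : ℕ) : ℤ), y₁, z₁, hnz, hg1, by omega, hkpos, hmin⟩

/-- polar values for binary form. -/
def Bpol (b c w y₁ z₁ y₂ z₂ : ℤ) : ℤ := b*y₁*y₂ + c*z₁*z₂ + w*(y₁*z₂ + y₂*z₁)

/-- Change of variables by a matrix [[p,q],[r,s]] of determinant ±1. -/
lemma bin_transfer (b c w p q r s : ℤ) (hdet : (p*s - q*r)^2 = 1) :
    (∀ Y Z : ℤ, Bval (Bval b c w p r) (Bval b c w q s) (Bpol b c w p r q s) Y Z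
        = Bval b c w (p*Y+q*Z) (r*Y+s*Z))
    ∧ (∀ y z : ℤ, ∃ Y Z : ℤ, p*Y+q*Z = y ∧ r*Y+s*Z = z)
    ∧ ((Bval b c w p r) * (Bval b c w q s) - (Bpol b c w p r q s)^2 = b*c - w^2) := by
  refine ⟨?_, ?_, ?_⟩
  · intro Y Z; unfold Bval Bpol; ring
  · intro y z
    set d := p*s - q*r with hd
    refine ⟨d*(s*y - q*z), d*(-r*y + p*z), ?_, ?_⟩
    · have : p*(d*(s*y - q*z)) + q*(d*(-r*y + p*z)) = d^2*y + (0:ℤ) := by rw [hd]; ring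
      rw [this, hdet]; ring
    · have : r*(d*(s*y - q*z)) + s*(d*(-r*y + p*z)) = d^2*z + (0:ℤ) := by rw [hd]; ring
      rw [this, hdet]; ring
  · have h : (Bval b c w p r) * (Bval b c w q s) - (Bpol b c w p r q s)^2
        = (b*c - w^2) * (p*s - q*r)^2 := by unfold Bval Bpol; ring
    rw [h, hdet]; ring

/-- Reduction of a positive-definite integral binary form. -/
lemma bin_normal (b c w Δ : ℤ)
    (hpos : ∀ y z : ℤ, ¬(y = 0 ∧ z = 0) → 0 < Bval b c w y z)
    (hdet : b*c - w^2 = Δ) :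
    ∃ k c₁ w₁ : ℤ, 0 < k ∧ k*c₁ - w₁^2 = Δ ∧ 0 ≤ 2*w₁ ∧ 2*w₁ ≤ k ∧ k ≤ c₁ ∧ 3*k^2 ≤ 4*Δ ∧
      (∀ y z : ℤ, ¬(y = 0 ∧ z = 0) → k ≤ Bval b c w y z) ∧
      (∀ m : ℤ, (∃ y z : ℤ, Bval k c₁ w₁ y z = m) → (∃ y z : ℤ, Bval b c w y z = m)) ∧
      (∀ m : ℤ, (∃ y z : ℤ, Bval b c w y z = m) → (∃ y z : ℤ, Bval k c₁ w₁ y z = m)) := by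
  obtain ⟨k, y₀, z₀, hnz, hprim, hval, hkpos, hmin⟩ := bin_exists_min b c w hpos
  -- Bezout: s*y₀ + t*z₀ = 1
  obtain ⟨s, t, hst⟩ : ∃ s t : ℤ, s*y₀ + t*z₀ = 1 := by
    refine ⟨Int.gcdA y₀ z₀, Int.gcdB y₀ z₀, ?_⟩
    have := Int.gcd_eq_gcd_ab y₀ z₀
    rw [hprim] at this
    push_cast at this
    linarith [this]
  -- first change of variables: columns (y₀,z₀), (-t,s); det = 1
  have hdet1 : (y₀*s - (-t)*z₀)^2 = 1 := by
    have : y₀*s - (-t)*z₀ = 1 := by linarith [hst]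
    rw [this]; norm_num
  obtain ⟨htr1, hsur1, hdet1'⟩ := bin_transfer b c w y₀ (-t) z₀ s hdet1
  set b' := Bval b c w y₀ z₀ with hb'
  set c' := Bval b c w (-t) s with hc'
  set w' := Bpol b c w y₀ z₀ (-t) s with hw'
  have hb'k : b' = k := hval
  -- positivity of transferred form
  have hpos1 : ∀ Y Z : ℤ, ¬(Y = 0 ∧ Z = 0) → 0 < Bval b' c' w' Y Z := by
    intro Y Z hYZ
    rw [htr1]
    apply hpos
    rintro ⟨h1, h2⟩
    -- then the inverse formulas give Y = Z = 0
    have e1 : s*(y₀*Y + -t*Z) - (-t)*(z₀*Y + s*Z) = Y*(s*y₀+t*z₀) := by ring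
    have e2 : -z₀*(y₀*Y + -t*Z) + y₀*(z₀*Y + s*Z) = Z*(s*y₀+t*z₀) := by ring
    rw [h1, h2, hst] at e1 e2
    simp at e1 e2
    exact hYZ ⟨by linarith, by linarith⟩
  have hmin1 : ∀ Y Z : ℤ, ¬(Y = 0 ∧ Z = 0) → k ≤ Bval b' c' w' Y Z := by
    intro Y Z hYZ
    rw [htr1]
    apply hmin
    rintro ⟨h1, h2⟩
    have e1 : s*(y₀*Y + -t*Z) - (-t)*(z₀*Y + s*Z) = Y*(s*y₀+t*z₀) := by ring
    have e2 : -z₀*(y₀*Y + -t*Z) + y₀*(z₀*Y + s*Z) = Z*(s*y₀+t*z₀) := by ring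
    rw [h1, h2, hst] at e1 e2
    simp at e1 e2
    exact hYZ ⟨by linarith, by linarith⟩
  -- now reduce w' modulo k, with a possible sign flip
  -- choose n with r2 = 2*w' + 2*n*k ∈ [0, 2k)
  set n := -((2*w') / (2*k)) with hn
  have hrange : 0 ≤ 2*w' + 2*n*k ∧ 2*w' + 2*n*k < 2*k := by
    have h2k : 0 < 2*k := by omega
    have := Int.emod_emod_of_dvd (2*w') (dvd_refl (2*k))
    have hmod := Int.emod_nonneg (2*w') (by omega : (2:ℤ)*k ≠ 0)
    have hlt := Int.emod_lt_of_pos (2*w') h2k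
    have hdiv : 2*w' % (2*k) = 2*w' - 2*k * ((2*w')/(2*k)) := by
      rw [Int.emod_def]
    constructor
    · rw [hn]; nlinarith [hmod, hdiv]
    · rw [hn]; nlinarith [hlt, hdiv]
  by_cases hcase : 2*w' + 2*n*k ≤ k
  · -- no flip needed: columns (1,0),(n,1); det 1
    have hd2 : ((1:ℤ)*1 - n*0)^2 = 1 := by norm_num
    obtain ⟨htr2, hsur2, hdet2'⟩ := bin_transfer b' c' w' 1 n 0 1 hd2
    set c₁ := Bval b' c' w' n 1 with hc₁
    set w₁ := Bpol b' c' w' 1 0 n 1 with hw₁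
    have hbb : Bval b' c' w' 1 0 = b' := by unfold Bval; ring
    have hw2 : 2*w₁ = 2*w' + 2*n*k := by
      unfold Bpol at hw₁; rw [hw₁, ← hb'k]; ring
    rw [hbb, hb'k] at hdet2'
    rw [hb'k] at hdet1'
    have hkc : k*c₁ - w₁^2 = Δ := by rw [hdet2', hdet1', hdet]
    have hkc₁ : k ≤ c₁ := hmin1 n 1 (by simp)
    have hw1b : 0 ≤ 2*w₁ := by linarith [hrange.1, hw2]
    have hw2b : 2*w₁ ≤ k := by linarith [hcase, hw2]
    refine ⟨k, c₁, w₁, hkpos, hkc, hw1b, hw2b, hkc₁, ?_, hmin, ?_, ?_⟩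
    · nlinarith [hkc, mul_le_mul_of_nonneg_left hkc₁ (le_of_lt hkpos),
        mul_le_mul hw2b hw2b hw1b (le_of_lt hkpos)]
    · rintro m ⟨Y, Z, hYZ⟩
      have h0 : Bval (Bval b' c' w' 1 0) c₁ w₁ Y Z = m := by rw [hbb, hb'k]; exact hYZ
      rw [htr2] at h0
      rw [htr1] at h0
      exact ⟨_, _, h0⟩
    · rintro m ⟨y, z, hyz⟩
      obtain ⟨Y, Z, hY1, hY2⟩ := hsur1 y z
      have h1 : Bval b' c' w' Y Z = m := by rw [htr1, hY1, hY2]; exact hyz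
      obtain ⟨Y2, Z2, hZ1, hZ2⟩ := hsur2 Y Z
      have h2 : Bval (Bval b' c' w' 1 0) c₁ w₁ Y2 Z2 = m := by
        rw [htr2, hZ1, hZ2]; exact h1
      rw [hbb, hb'k] at h2
      exact ⟨_, _, h2⟩

  · -- flip: columns (-1,0),(n-1,1); det -1
    have hd2 : ((-1:ℤ)*1 - (n-1)*0)^2 = 1 := by norm_num
    obtain ⟨htr2, hsur2, hdet2'⟩ := bin_transfer b' c' w' (-1) (n-1) 0 1 hd2
    set c₁ := Bval b' c' w' (n-1) 1 with hc₁
    set w₁ := Bpol b' c' w' (-1) 0 (n-1) 1 with hw₁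
    have hbb : Bval b' c' w' (-1) 0 = b' := by unfold Bval; ring
    have hw2 : 2*w₁ = 2*k - (2*w' + 2*n*k) := by
      unfold Bpol at hw₁; rw [hw₁, ← hb'k]; ring
    rw [hbb, hb'k] at hdet2'
    rw [hb'k] at hdet1'
    have hkc : k*c₁ - w₁^2 = Δ := by rw [hdet2', hdet1', hdet]
    have hkc₁ : k ≤ c₁ := hmin1 (n-1) 1 (by simp)
    have hw1b : 0 ≤ 2*w₁ := by linarith [hrange.2, hw2]
    have hw2b : 2*w₁ ≤ k := by linarith [hcase, hw2]
    refine ⟨k, c₁, w₁, hkpos, hkc, hw1b, hw2b, hkc₁, ?_, hmin, ?_, ?_⟩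
    · nlinarith [hkc, mul_le_mul_of_nonneg_left hkc₁ (le_of_lt hkpos),
        mul_le_mul hw2b hw2b hw1b (le_of_lt hkpos)]
    · rintro m ⟨Y, Z, hYZ⟩
      have h0 : Bval (Bval b' c' w' (-1) 0) c₁ w₁ Y Z = m := by rw [hbb, hb'k]; exact hYZ
      rw [htr2] at h0
      rw [htr1] at h0
      exact ⟨_, _, h0⟩
    · rintro m ⟨y, z, hyz⟩
      obtain ⟨Y, Z, hY1, hY2⟩ := hsur1 y z
      have h1 : Bval b' c' w' Y Z = m := by rw [htr1, hY1, hY2]; exact hyz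
      obtain ⟨Y2, Z2, hZ1, hZ2⟩ := hsur2 Y Z
      have h2 : Bval (Bval b' c' w' (-1) 0) c₁ w₁ Y2 Z2 = m := by
        rw [htr2, hZ1, hZ2]; exact h1
      rw [hbb, hb'k] at h2
      exact ⟨_, _, h2⟩



def Tval (a b c u v w x y z : ℤ) : ℤ :=
  a*x^2 + b*y^2 + c*z^2 + 2*u*x*y + 2*v*x*z + 2*w*y*z

def Tpol (a b c u v w x₁ y₁ z₁ x₂ y₂ z₂ : ℤ) : ℤ :=
  a*x₁*x₂ + b*y₁*y₂ + c*z₁*z₂ + u*(x₁*y₂+x₂*y₁) + v*(x₁*z₂+x₂*z₁) + w*(y₁*z₂+y₂*z₁)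

def Tdet (a b c u v w : ℤ) : ℤ := a*b*c + 2*u*v*w - a*w^2 - b*v^2 - c*u^2

lemma Tval_smul (a b c u v w g x y z : ℤ) :
    Tval a b c u v w (g*x) (g*y) (g*z) = g^2 * Tval a b c u v w x y z := by
  unfold Tval; ring

/-- change of variables for ternary forms along a determinant-1 integer matrix,
columns (p₁,p₂,p₃), (q₁,q₂,q₃), (r₁,r₂,r₃). -/
lemma ter_transfer (a b c u v w p₁ p₂ p₃ q₁ q₂ q₃ r₁ r₂ r₃ : ℤ)
    (hdet : p₁*(q₂*r₃ - q₃*r₂) - q₁*(p₂*r₃ - p₃*r₂) + r₁*(p₂*q₃ - p₃*q₂) = 1) :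
    (∀ X Y Z : ℤ,
      Tval (Tval a b c u v w p₁ p₂ p₃) (Tval a b c u v w q₁ q₂ q₃) (Tval a b c u v w r₁ r₂ r₃)
        (Tpol a b c u v w p₁ p₂ p₃ q₁ q₂ q₃) (Tpol a b c u v w p₁ p₂ p₃ r₁ r₂ r₃)
        (Tpol a b c u v w q₁ q₂ q₃ r₁ r₂ r₃) X Y Z
      = Tval a b c u v w (p₁*X+q₁*Y+r₁*Z) (p₂*X+q₂*Y+r₂*Z) (p₃*X+q₃*Y+r₃*Z))
    ∧ (∀ x y z : ℤ, ∃ X Y Z : ℤ,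
        p₁*X+q₁*Y+r₁*Z = x ∧ p₂*X+q₂*Y+r₂*Z = y ∧ p₃*X+q₃*Y+r₃*Z = z)
    ∧ (Tdet (Tval a b c u v w p₁ p₂ p₃) (Tval a b c u v w q₁ q₂ q₃) (Tval a b c u v w r₁ r₂ r₃)
        (Tpol a b c u v w p₁ p₂ p₃ q₁ q₂ q₃) (Tpol a b c u v w p₁ p₂ p₃ r₁ r₂ r₃)
        (Tpol a b c u v w q₁ q₂ q₃ r₁ r₂ r₃) = Tdet a b c u v w) := by
  refine ⟨?_, ?_, ?_⟩
  · intro X Y Z; unfold Tval Tpol; ring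
  · intro x y z
    refine ⟨(q₂*r₃-q₃*r₂)*x - (q₁*r₃-q₃*r₁)*y + (q₁*r₂-q₂*r₁)*z,
            -((p₂*r₃-p₃*r₂)*x) + (p₁*r₃-p₃*r₁)*y - (p₁*r₂-p₂*r₁)*z,
            (p₂*q₃-p₃*q₂)*x - (p₁*q₃-p₃*q₁)*y + (p₁*q₂-p₂*q₁)*z, ?_, ?_, ?_⟩
    · linear_combination x * hdet
    · linear_combination y * hdet
    · linear_combination z * hdet
  · have h : Tdet (Tval a b c u v w p₁ p₂ p₃) (Tval a b c u v w q₁ q₂ q₃)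
        (Tval a b c u v w r₁ r₂ r₃)
        (Tpol a b c u v w p₁ p₂ p₃ q₁ q₂ q₃) (Tpol a b c u v w p₁ p₂ p₃ r₁ r₂ r₃)
        (Tpol a b c u v w q₁ q₂ q₃ r₁ r₂ r₃)
        = Tdet a b c u v w *
          (p₁*(q₂*r₃ - q₃*r₂) - q₁*(p₂*r₃ - p₃*r₂) + r₁*(p₂*q₃ - p₃*q₂))^2 := by
      unfold Tval Tpol Tdet; ring
    rw [h, hdet]; ring

/-- every primitive integer vector is the first column of a det-1 matrix. -/
lemma ter_complete (α β γ : ℤ) (h : Int.gcd (Int.gcd α β) γ = 1) :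
    ∃ q₁ q₂ q₃ r₁ r₂ r₃ : ℤ,
      α*(q₂*r₃ - q₃*r₂) - q₁*(β*r₃ - γ*r₂) + r₁*(β*q₃ - γ*q₂) = 1 := by
  by_cases hg : Int.gcd α β = 0
  · have hα : α = 0 := by
      have := Int.gcd_eq_zero_iff.mp hg; exact this.1
    have hβ : β = 0 := by
      have := Int.gcd_eq_zero_iff.mp hg; exact this.2
    rw [hg] at h
    simp [Int.gcd] at h
    -- γ.natAbs = 1
    rcases Int.natAbs_eq_iff.mp h with h1 | h1
    · exact ⟨1, 0, 0, 0, 1, 0, by rw [hα, hβ, h1]; ring⟩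
    · exact ⟨1, 0, 0, 0, -1, 0, by rw [hα, hβ, h1]; ring⟩
  · set g : ℤ := (Int.gcd α β : ℤ) with hgdef
    have hgne : g ≠ 0 := by
      rw [hgdef]; exact_mod_cast hg
    have hst : α * Int.gcdA α β + β * Int.gcdB α β = g := (Int.gcd_eq_gcd_ab α β).symm
    set s := Int.gcdA α β
    set t := Int.gcdB α β
    have hST' : g * Int.gcdA g γ + γ * Int.gcdB g γ = 1 := by
      have h2 := (Int.gcd_eq_gcd_ab g γ).symm
      have h3 : Int.gcd g γ = 1 := by
        exact h
      rw [h3] at h2; push_cast at h2; linarith [h2]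
    set S := Int.gcdA g γ
    set T := Int.gcdB g γ
    obtain ⟨A', hA⟩ : g ∣ α := Int.gcd_dvd_left α β
    obtain ⟨B', hB⟩ : g ∣ β := Int.gcd_dvd_right α β
    have hsAtB : s*A' + t*B' = 1 := by
      have : g * (s*A' + t*B') = g * 1 := by
        rw [hA, hB] at hst; linear_combination hst
      exact mul_left_cancel₀ hgne this
    refine ⟨-t, s, 0, -(T*A'), -(T*B'), S, ?_⟩
    rw [hA, hB]
    linear_combination (g*S + γ*T) * hsAtB + hST'



lemma round_div (k W : ℤ) (hk : 0 < k) :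
    ∃ x : ℤ, -k ≤ 2*(k*x + W) ∧ 2*(k*x + W) ≤ k := by
  refine ⟨-((2*W + k) / (2*k)), ?_, ?_⟩
  · have h := Int.mul_ediv_add_emod (2*W + k) (2*k)
    have h0 := Int.emod_nonneg (2*W + k) (by omega : (2:ℤ)*k ≠ 0)
    have h1 := Int.emod_lt_of_pos (2*W + k) (by omega : 0 < (2:ℤ)*k)
    nlinarith [h, h0, h1]
  · have h := Int.mul_ediv_add_emod (2*W + k) (2*k)
    have h0 := Int.emod_nonneg (2*W + k) (by omega : (2:ℤ)*k ≠ 0)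
    have h1 := Int.emod_lt_of_pos (2*W + k) (by omega : 0 < (2:ℤ)*k)
    nlinarith [h, h0, h1]

lemma ter_exists_min (a b c u v w : ℤ)
    (hpos : ∀ x y z : ℤ, ¬(x = 0 ∧ y = 0 ∧ z = 0) → 0 < Tval a b c u v w x y z) :
    ∃ (k x₀ y₀ z₀ : ℤ), ¬(x₀ = 0 ∧ y₀ = 0 ∧ z₀ = 0) ∧ Int.gcd (Int.gcd x₀ y₀) z₀ = 1 ∧
      Tval a b c u v w x₀ y₀ z₀ = k ∧ 0 < k ∧
      ∀ x y z : ℤ, ¬(x = 0 ∧ y = 0 ∧ z = 0) → k ≤ Tval a b c u v w x y z := by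
  classical
  set S : Set ℕ := {n | ∃ x y z : ℤ, ¬(x = 0 ∧ y = 0 ∧ z = 0) ∧ Tval a b c u v w x y z = n}
    with hS
  have hne : S.Nonempty := by
    refine ⟨(Tval a b c u v w 1 0 0).toNat, 1, 0, 0, by simp, ?_⟩
    have := hpos 1 0 0 (by simp)
    omega
  obtain ⟨x₁, y₁, z₁, hnz, hval⟩ := Nat.sInf_mem hne
  have hmin : ∀ x y z : ℤ, ¬(x = 0 ∧ y = 0 ∧ z = 0) →
      ((sInf S : ℕ) : ℤ) ≤ Tval a b c u v w x y z := by
    intro x y z h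
    have h0 := hpos x y z h
    have : (Tval a b c u v w x y z).toNat ∈ S := ⟨x, y, z, h, by omega⟩
    have := Nat.sInf_le this
    omega
  have hkpos : 0 < ((sInf S : ℕ) : ℤ) := by
    have := hpos x₁ y₁ z₁ hnz; omega
  set g : ℕ := Int.gcd (Int.gcd x₁ y₁) z₁ with hg
  have hgd1 : (g : ℤ) ∣ x₁ :=
    dvd_trans (Int.gcd_dvd_left _ _) (Int.gcd_dvd_left _ _)
  have hgd2 : (g : ℤ) ∣ y₁ :=
    dvd_trans (Int.gcd_dvd_left _ _) (Int.gcd_dvd_right _ _)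
  have hgd3 : (g : ℤ) ∣ z₁ := Int.gcd_dvd_right _ _
  obtain ⟨x₂, hx₂⟩ := hgd1
  obtain ⟨y₂, hy₂⟩ := hgd2
  obtain ⟨z₂, hz₂⟩ := hgd3
  have hgne : g ≠ 0 := by
    intro h
    rw [h] at hx₂ hy₂ hz₂; simp at hx₂ hy₂ hz₂
    exact hnz ⟨hx₂, hy₂, hz₂⟩
  have hnz2 : ¬(x₂ = 0 ∧ y₂ = 0 ∧ z₂ = 0) := by
    rintro ⟨rfl, rfl, rfl⟩; simp at hx₂ hy₂ hz₂; exact hnz ⟨hx₂, hy₂, hz₂⟩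
  have hval2 : Tval a b c u v w x₁ y₁ z₁ = (g:ℤ)^2 * Tval a b c u v w x₂ y₂ z₂ := by
    rw [hx₂, hy₂, hz₂, Tval_smul]
  have hg1 : g = 1 := by
    by_contra hne1
    have hg2 : (2:ℤ) ≤ (g:ℤ) := by omega
    have h1 : ((sInf S : ℕ) : ℤ) ≤ Tval a b c u v w x₂ y₂ z₂ := hmin _ _ _ hnz2
    have h2 : 0 < Tval a b c u v w x₂ y₂ z₂ := hpos _ _ _ hnz2
    have key : ((sInf S : ℕ) : ℤ) = (g:ℤ)^2 * Tval a b c u v w x₂ y₂ z₂ := by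
      rw [← hval2, hval]
    have hg4 : (4:ℤ) ≤ (g:ℤ)^2 := by nlinarith
    nlinarith [key, h1, h2, hg4]
  exact ⟨((sInf S : ℕ) : ℤ), x₁, y₁, z₁, hnz, hg1, by omega, hkpos, hmin⟩

set_option maxHeartbeats 1000000 in
lemma ter_normalize (a b c u v w : ℤ)
    (hpos : ∀ x y z : ℤ, ¬(x = 0 ∧ y = 0 ∧ z = 0) → 0 < Tval a b c u v w x y z)
    (hdet : Tdet a b c u v w = 3) (m : ℤ)
    (hm : ∃ x y z : ℤ, Tval a b c u v w x y z = m) :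
    (∃ x y z : ℤ, x^2 + y^2 + 3*z^2 = m) ∨
    (∃ x y z : ℤ, x^2 + 2*y^2 + 2*z^2 + 2*y*z = m) := by
  obtain ⟨k, x₀, y₀, z₀, hnz0, hprim, hval0, hkpos, hmin⟩ := ter_exists_min a b c u v w hpos
  obtain ⟨q₁, q₂, q₃, r₁, r₂, r₃, hdetU⟩ := ter_complete x₀ y₀ z₀ hprim
  obtain ⟨htr, hsur, hdet'⟩ := ter_transfer a b c u v w x₀ y₀ z₀ q₁ q₂ q₃ r₁ r₂ r₃ hdetU
  have hinj : ∀ X Y Z : ℤ, x₀*X+q₁*Y+r₁*Z = 0 → y₀*X+q₂*Y+r₂*Z = 0 →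
      z₀*X+q₃*Y+r₃*Z = 0 → (X = 0 ∧ Y = 0 ∧ Z = 0) := by
    intro X Y Z h1 h2 h3
    refine ⟨?_, ?_, ?_⟩
    · linear_combination (q₂*r₃-q₃*r₂)*h1 - (q₁*r₃-q₃*r₁)*h2 + (q₁*r₂-q₂*r₁)*h3 - X*hdetU
    · linear_combination (-(y₀*r₃-z₀*r₂))*h1 + (x₀*r₃-z₀*r₁)*h2 - (x₀*r₂-y₀*r₁)*h3 - Y*hdetU
    · linear_combination (y₀*q₃-z₀*q₂)*h1 - (x₀*q₃-z₀*q₁)*h2 + (x₀*q₂-y₀*q₁)*h3 - Z*hdetU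
  obtain ⟨b₁, hb₁⟩ : ∃ t, t = Tval a b c u v w q₁ q₂ q₃ := ⟨_, rfl⟩
  obtain ⟨c₁, hc₁⟩ : ∃ t, t = Tval a b c u v w r₁ r₂ r₃ := ⟨_, rfl⟩
  obtain ⟨u₁, hu₁⟩ : ∃ t, t = Tpol a b c u v w x₀ y₀ z₀ q₁ q₂ q₃ := ⟨_, rfl⟩
  obtain ⟨v₁, hv₁⟩ : ∃ t, t = Tpol a b c u v w x₀ y₀ z₀ r₁ r₂ r₃ := ⟨_, rfl⟩
  obtain ⟨w₁, hw₁⟩ : ∃ t, t = Tpol a b c u v w q₁ q₂ q₃ r₁ r₂ r₃ := ⟨_, rfl⟩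
  rw [← hb₁, ← hc₁, ← hu₁, ← hv₁, ← hw₁, hval0] at htr hdet'
  rw [hdet] at hdet'
  clear hb₁ hc₁ hu₁ hv₁ hw₁ hval0
  -- A1 = (k, b₁, c₁, u₁, v₁, w₁) has the same nonzero values, min k, det 3
  have hpos1 : ∀ X Y Z : ℤ, ¬(X = 0 ∧ Y = 0 ∧ Z = 0) →
      0 < Tval k b₁ c₁ u₁ v₁ w₁ X Y Z := by
    intro X Y Z hXYZ
    rw [htr]
    apply hpos
    rintro ⟨h1, h2, h3⟩
    exact hXYZ (hinj X Y Z h1 h2 h3)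
  have hmin1 : ∀ X Y Z : ℤ, ¬(X = 0 ∧ Y = 0 ∧ Z = 0) →
      k ≤ Tval k b₁ c₁ u₁ v₁ w₁ X Y Z := by
    intro X Y Z hXYZ
    rw [htr]
    apply hmin
    rintro ⟨h1, h2, h3⟩
    exact hXYZ (hinj X Y Z h1 h2 h3)
  -- Schur complement binary form
  have I1 : ∀ x y z : ℤ, 4*(k * Tval k b₁ c₁ u₁ v₁ w₁ x y z)
      = (2*(k*x + (u₁*y + v₁*z)))^2 + 4*Bval (k*b₁-u₁^2) (k*c₁-v₁^2) (k*w₁-u₁*v₁) y z := by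
    intro x y z; unfold Tval Bval; ring
  have hlow : ∀ y z : ℤ, ¬(y = 0 ∧ z = 0) →
      3*k^2 ≤ 4*Bval (k*b₁-u₁^2) (k*c₁-v₁^2) (k*w₁-u₁*v₁) y z := by
    intro y z hyz
    obtain ⟨x, hx1, hx2⟩ := round_div k (u₁*y + v₁*z) hkpos
    have hv := hmin1 x y z (by rintro ⟨_, h2, h3⟩; exact hyz ⟨h2, h3⟩)
    have hI := I1 x y z
    have hs2 : (2*(k*x + (u₁*y + v₁*z)))^2 ≤ k^2 := sq_le_sq' hx1 hx2
    have hkT : k*k ≤ k * Tval k b₁ c₁ u₁ v₁ w₁ x y z :=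
      mul_le_mul_of_nonneg_left hv (le_of_lt hkpos)
    linarith [hI, hs2, hkT]
  have hposB : ∀ y z : ℤ, ¬(y = 0 ∧ z = 0) →
      0 < Bval (k*b₁-u₁^2) (k*c₁-v₁^2) (k*w₁-u₁*v₁) y z := by
    intro y z hyz
    have := hlow y z hyz
    linarith [this, mul_pos hkpos hkpos]
  have hdetB : (k*b₁-u₁^2)*(k*c₁-v₁^2) - (k*w₁-u₁*v₁)^2 = 3*k := by
    have h : (k*b₁-u₁^2)*(k*c₁-v₁^2) - (k*w₁-u₁*v₁)^2 = k * Tdet k b₁ c₁ u₁ v₁ w₁ := by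
      unfold Tdet; ring
    rw [h, hdet']; ring
  obtain ⟨k₂, c₂, w₂, hk₂pos, hk₂det, _, _, _, hk₂sq, hmin₂, hback₂, _⟩ :=
    bin_normal (k*b₁-u₁^2) (k*c₁-v₁^2) (k*w₁-u₁*v₁) (3*k) hposB hdetB
  obtain ⟨ya, za, hya⟩ := hback₂ k₂ ⟨1, 0, by unfold Bval; ring⟩
  have hnza : ¬(ya = 0 ∧ za = 0) := by
    rintro ⟨rfl, rfl⟩
    unfold Bval at hya
    simp at hya
    omega
  have hlowa : 3*k^2 ≤ 4*k₂ := by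
    have := hlow ya za hnza
    rw [hya] at this
    exact this
  have hk1 : k = 1 := by
    have hsq : (3*k^2)*(3*k^2) ≤ (4*k₂)*(4*k₂) :=
      mul_self_le_mul_self (by positivity) hlowa
    have h27 : 27*(k^2*k^2) ≤ 192*k := by linarith [hsq, hk₂sq]
    have hk2 : k ≤ 1 := by
      by_contra hgt
      push_neg at hgt
      have h2 : (2:ℤ) ≤ k := hgt
      have c1 : (2:ℤ)*2 ≤ k*k := mul_le_mul h2 h2 (by norm_num) (by linarith)
      have c2 : (2:ℤ)*(2*2) ≤ k*(k*k) := mul_le_mul h2 c1 (by norm_num) (by linarith)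
      have c4 := mul_le_mul_of_nonneg_left c2 (by positivity : (0:ℤ) ≤ 27*k)
      linarith [h27, c4, hkpos]
    omega
  subst hk1
  -- second change of variables: clear the cross terms u₁, v₁
  have hdetU2 : (1:ℤ)*((1:ℤ)*(1:ℤ) - (0:ℤ)*(0:ℤ)) - (-u₁)*((0:ℤ)*1 - 0*0)
      + (-v₁)*((0:ℤ)*0 - (0:ℤ)*1) = 1 := by ring
  obtain ⟨htr2, hsur2, hdet2'⟩ :=
    ter_transfer 1 b₁ c₁ u₁ v₁ w₁ 1 0 0 (-u₁) 1 0 (-v₁) 0 1 hdetU2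
  have ha2 : Tval 1 b₁ c₁ u₁ v₁ w₁ 1 0 0 = 1 := by unfold Tval; ring
  have hu2 : Tpol 1 b₁ c₁ u₁ v₁ w₁ 1 0 0 (-u₁) 1 0 = 0 := by unfold Tpol; ring
  have hv2 : Tpol 1 b₁ c₁ u₁ v₁ w₁ 1 0 0 (-v₁) 0 1 = 0 := by unfold Tpol; ring
  obtain ⟨b₂, hb₂⟩ : ∃ t, t = Tval 1 b₁ c₁ u₁ v₁ w₁ (-u₁) 1 0 := ⟨_, rfl⟩
  obtain ⟨c₂', hc₂'⟩ : ∃ t, t = Tval 1 b₁ c₁ u₁ v₁ w₁ (-v₁) 0 1 := ⟨_, rfl⟩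
  obtain ⟨w₂', hw₂'⟩ : ∃ t, t = Tpol 1 b₁ c₁ u₁ v₁ w₁ (-u₁) 1 0 (-v₁) 0 1 := ⟨_, rfl⟩
  rw [← hb₂, ← hc₂', ← hw₂', ha2, hu2, hv2] at htr2 hdet2'
  rw [hdet'] at hdet2'
  clear hb₂ hc₂' hw₂'
  have hdec : ∀ x y z : ℤ, Tval 1 b₂ c₂' 0 0 w₂' x y z = x^2 + Bval b₂ c₂' w₂' y z := by
    intro x y z; unfold Tval Bval; ring
  have hdetB2 : b₂*c₂' - w₂'^2 = 3 := by
    have h : Tdet 1 b₂ c₂' 0 0 w₂' = b₂*c₂' - w₂'^2 := by unfold Tdet; ring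
    rw [← h, hdet2']
  have hposB2 : ∀ y z : ℤ, ¬(y = 0 ∧ z = 0) → 0 < Bval b₂ c₂' w₂' y z := by
    intro y z hyz
    have e := htr2 0 y z
    have e2 : Bval b₂ c₂' w₂' y z = Tval 1 b₂ c₂' 0 0 w₂' 0 y z := by rw [hdec]; ring
    rw [e2, e]
    apply hpos1
    rintro ⟨h1, h2, h3⟩
    refine hyz ⟨?_, ?_⟩ <;> linarith
  obtain ⟨k₃, c₃, w₃, hk₃pos, hk₃det, hw₃0, hw₃k, hk₃c, hk₃sq, hmin₃, hback₃, hfwd₃⟩ :=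
    bin_normal b₂ c₂' w₂' 3 hposB2 hdetB2
  -- chase the representation of m
  obtain ⟨x, y, z, hxyz⟩ := hm
  obtain ⟨X, Y, Z, hX1, hX2, hX3⟩ := hsur x y z
  have hm1 : Tval 1 b₁ c₁ u₁ v₁ w₁ X Y Z = m := by
    rw [htr, hX1, hX2, hX3]; exact hxyz
  obtain ⟨X', Y', Z', hY1, hY2, hY3⟩ := hsur2 X Y Z
  have hm2 : Tval 1 b₂ c₂' 0 0 w₂' X' Y' Z' = m := by
    rw [htr2, hY1, hY2, hY3]; exact hm1
  rw [hdec] at hm2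
  have hmB : Bval b₂ c₂' w₂' Y' Z' = m - X'^2 := by linarith
  obtain ⟨Y₃, Z₃, hY₃⟩ := hfwd₃ (m - X'^2) ⟨Y', Z', hmB⟩
  have hk₃b : k₃ ≤ 2 := by
    by_contra hgt
    push_neg at hgt
    have h3 : (3:ℤ) ≤ k₃ := hgt
    have c1 : (3:ℤ)*3 ≤ k₃*k₃ := mul_le_mul h3 h3 (by norm_num) (by linarith)
    linarith [hk₃sq, c1]
  have hk₃2 : k₃ = 1 ∨ k₃ = 2 := by omega
  rcases hk₃2 with h1 | h2
  · subst h1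
    have hw₃ : w₃ = 0 := by omega
    subst hw₃
    have hc₃ : c₃ = 3 := by linarith [hk₃det]
    subst hc₃
    left
    refine ⟨X', Y₃, Z₃, ?_⟩
    unfold Bval at hY₃
    linarith [hY₃]
  · subst h2
    have hw₃ : w₃ = 0 ∨ w₃ = 1 := by omega
    rcases hw₃ with h | h
    · subst h
      exfalso
      have h23 : 2*c₃ = 3 := by linarith [hk₃det]
      omega
    · subst h
      have hc₃ : c₃ = 2 := by linarith [hk₃det]
      subst hc₃
      right
      refine ⟨X', Y₃, Z₃, ?_⟩
      unfold Bval at hY₃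
      linarith [hY₃]


lemma exists_good_prime (M₁ : ℕ) (a12 : ℕ) (bound : ℕ)
    (hModd : M₁ % 2 = 1) (hM3 : ¬ 3 ∣ M₁) (hMgt : 3 < M₁) (ha : a12 = 1 ∨ a12 = 5) :
    ∃ p : ℕ, p.Prime ∧ bound < p ∧ p % 12 = a12 ∧ p % M₁ = M₁ - 3 := by
  have hco : Nat.Coprime 12 M₁ := by
    have h2 : Nat.Coprime 2 M₁ := (Nat.prime_two.coprime_iff_not_dvd).mpr (by omega)
    have h3 : Nat.Coprime 3 M₁ := (Nat.prime_three.coprime_iff_not_dvd).mpr hM3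
    have h4 : Nat.Coprime 4 M₁ := Nat.Coprime.pow_left 2 h2
    exact Nat.Coprime.mul h4 h3
  obtain ⟨k, hk12, hkM⟩ := Nat.chineseRemainder hco a12 (M₁ - 3)
  set N := 12 * M₁ with hN
  haveI : NeZero N := ⟨by positivity⟩
  have hkco : Nat.Coprime k N := by
    have hk12' : k % 12 = a12 % 12 := hk12
    have hkM' : k % M₁ = (M₁ - 3) % M₁ := hkM
    have e1 : Nat.Coprime k 12 := by
      have hg : Nat.gcd 12 k = Nat.gcd (k % 12) 12 := Nat.gcd_rec 12 k
      rw [hk12'] at hg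
      have : Nat.Coprime 12 k := by
        rcases ha with h | h <;> rw [h] at hg <;> simp [Nat.Coprime, hg] <;> decide
      exact this.symm
    have e2 : Nat.Coprime k M₁ := by
      have hg : Nat.gcd M₁ k = Nat.gcd (k % M₁) M₁ := Nat.gcd_rec M₁ k
      rw [hkM', Nat.mod_eq_of_lt (by omega)] at hg
      obtain ⟨A, hA⟩ : ∃ A, M₁ = 3 + A := ⟨M₁ - 3, by omega⟩
      have hsub : M₁ - 3 = A := by omega
      have h2 : Nat.gcd (M₁ - 3) M₁ = Nat.gcd (M₁ - 3) 3 := by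
        rw [hsub, hA]
        exact Nat.gcd_add_self_right A 3
      have h3 : Nat.Coprime (M₁ - 3) 3 :=
        (Nat.coprime_comm.mp ((Nat.prime_three.coprime_iff_not_dvd).mpr (by omega)))
      have : Nat.Coprime M₁ k := by
        unfold Nat.Coprime at *
        rw [hg, h2, h3]
      exact this.symm
    exact Nat.Coprime.mul_right e1 e2
  have hunit : IsUnit ((k : ZMod N)) := (ZMod.isUnit_iff_coprime k N).mpr hkco
  obtain ⟨p, hpgt, hpp, hpmod⟩ :=
    Nat.forall_exists_prime_gt_and_eq_mod hunit (bound + N + k)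
  have hmodeq : p ≡ k [MOD N] := (ZMod.natCast_eq_natCast_iff p k N).mp hpmod
  refine ⟨p, hpp, by omega, ?_, ?_⟩
  · have h12 : p ≡ a12 [MOD 12] :=
      Nat.ModEq.trans (Nat.ModEq.of_dvd ⟨M₁, hN⟩ hmodeq) hk12
    have : p % 12 = a12 % 12 := h12
    omega
  · have hM : p ≡ M₁ - 3 [MOD M₁] :=
      Nat.ModEq.trans (Nat.ModEq.of_dvd ⟨12, by rw [hN]; ring⟩ hmodeq) hkM
    have h1 : p % M₁ = (M₁ - 3) % M₁ := hM
    have h2 : (M₁ - 3) % M₁ = M₁ - 3 := Nat.mod_eq_of_lt (by omega)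
    rw [h2] at h1
    exact h1


open ZMod in
lemma jacobi_caseA (M p : ℕ) (hModd : M % 2 = 1) (hM4 : M % 4 = 1)
    (hM3 : M % 3 = 1 ∨ M % 3 = 2) (hMgt : 3 < M)
    (hp4 : p % 4 = 1) (hpodd : Odd p)
    (hp3 : p % 3 = M % 3) (hpM : (M:ℤ) ∣ (p:ℤ) + 3) :
    jacobiSym (-3 * (M:ℤ)) p = 1 := by
  have hModd' : Odd M := Nat.odd_iff.mpr hModd
  have split : jacobiSym (-3 * (M:ℤ)) p
      = jacobiSym (-1) p * jacobiSym 3 p * jacobiSym (M:ℤ) p := by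
    have : (-3 * (M:ℤ)) = (-1) * 3 * (M:ℤ) := by ring
    rw [this, jacobiSym.mul_left, jacobiSym.mul_left]
  have hneg1 : jacobiSym (-1) p = 1 := by
    rw [jacobiSym.at_neg_one hpodd]
    exact ZMod.χ₄_nat_one_mod_four hp4
  have h3p : jacobiSym 3 p = jacobiSym (p:ℤ) 3 := by
    have := jacobiSym.quadratic_reciprocity_one_mod_four' (by decide : Odd 3) hp4
    exact_mod_cast this
  have hMp : jacobiSym (M:ℤ) p = jacobiSym (p:ℤ) M := by
    have := jacobiSym.quadratic_reciprocity_one_mod_four hp4 hModd'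
    exact_mod_cast this.symm
  have hpM' : jacobiSym (p:ℤ) M = jacobiSym (-3) M := by
    apply jacobiSym.mod_left'
    have : (p:ℤ) ≡ -3 [ZMOD (M:ℕ)] := by
      rw [Int.ModEq]
      apply Int.ModEq.symm
      rw [Int.modEq_iff_dvd]
      simpa using hpM
    exact this
  have hm3M : jacobiSym (-3) M = jacobiSym (M:ℤ) 3 := by
    have e1 : (-3 : ℤ) = (-1) * 3 := by ring
    rw [e1, jacobiSym.mul_left]
    have e2 : jacobiSym (-1) M = 1 := by
      rw [jacobiSym.at_neg_one hModd']
      exact ZMod.χ₄_nat_one_mod_four hM4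
    have e3 : jacobiSym 3 M = jacobiSym (M:ℤ) 3 := by
      have := jacobiSym.quadratic_reciprocity_one_mod_four' (by decide : Odd 3) hM4
      exact_mod_cast this
    rw [e2, e3]; ring
  have hp3' : jacobiSym (p:ℤ) 3 = jacobiSym (M:ℤ) 3 := by
    rw [jacobiSym.mod_left (p:ℤ) 3, jacobiSym.mod_left (M:ℤ) 3]
    congr 1
    omega
  rw [split, hneg1, h3p, hMp, hpM', hm3M, hp3']
  have : jacobiSym (M:ℤ) 3 = 1 ∨ jacobiSym (M:ℤ) 3 = -1 := by
    rcases hM3 with h | h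
    · left
      rw [jacobiSym.mod_left (M:ℤ) 3]
      have h2 : (M:ℤ) % ((3:ℕ):ℤ) = 1 := by omega
      rw [h2]; exact jacobiSym.one_left 3
    · right
      rw [jacobiSym.mod_left (M:ℤ) 3]
      have h2 : (M:ℤ) % ((3:ℕ):ℤ) = 2 := by omega
      rw [h2]
      have := jacobiSym.at_two (by decide : Odd 3)
      rw [this]; decide
  rcases this with h | h <;> rw [h] <;> ring


lemma jacobi_caseB (n p : ℕ) (hnodd : n % 2 = 1) (hn4 : n % 4 = 3) (hn3 : n % 3 = 1)
    (hp4 : p % 4 = 1) (hpodd : Odd p) (hpn : (n:ℤ) ∣ (p:ℤ) + 3) :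
    jacobiSym (-(n:ℤ)) p = 1 := by
  have hnodd' : Odd n := Nat.odd_iff.mpr hnodd
  have split : jacobiSym (-(n:ℤ)) p = jacobiSym (-1) p * jacobiSym (n:ℤ) p := by
    have : (-(n:ℤ)) = (-1) * (n:ℤ) := by ring
    rw [this, jacobiSym.mul_left]
  have hneg1 : jacobiSym (-1) p = 1 := by
    rw [jacobiSym.at_neg_one hpodd]
    exact ZMod.χ₄_nat_one_mod_four hp4
  have hnp : jacobiSym (n:ℤ) p = jacobiSym (p:ℤ) n := by
    have := jacobiSym.quadratic_reciprocity_one_mod_four hp4 hnodd'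
    exact_mod_cast this.symm
  have hpn' : jacobiSym (p:ℤ) n = jacobiSym (-3) n := by
    apply jacobiSym.mod_left'
    have : (p:ℤ) ≡ -3 [ZMOD (n:ℕ)] := by
      rw [Int.ModEq]
      apply Int.ModEq.symm
      rw [Int.modEq_iff_dvd]
      simpa using hpn
    exact this
  have hm3n : jacobiSym (-3) n = -jacobiSym 3 n := by
    have e1 : (-3 : ℤ) = (-1) * 3 := by ring
    rw [e1, jacobiSym.mul_left]
    have e2 : jacobiSym (-1) n = -1 := by
      rw [jacobiSym.at_neg_one hnodd']
      exact ZMod.χ₄_nat_three_mod_four hn4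
    rw [e2]; ring
  have h3n : jacobiSym 3 n = -jacobiSym (n:ℤ) 3 := by
    have := jacobiSym.quadratic_reciprocity_three_mod_four (by norm_num : 3 % 4 = 3) hn4
    exact_mod_cast this
  have hn3' : jacobiSym (n:ℤ) 3 = 1 := by
    rw [jacobiSym.mod_left (n:ℤ) 3]
    have h2 : (n:ℤ) % ((3:ℕ):ℤ) = 1 := by omega
    rw [h2]; exact jacobiSym.one_left 3
  rw [split, hneg1, hnp, hpn', hm3n, h3n, hn3']
  ring

lemma H_mod8 (x y z m : ℤ) (h8 : m % 8 = 5) : x^2 + 2*y^2 + 2*z^2 + 2*y*z ≠ m := by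
  intro heq
  have hdvd : (8:ℤ) ∣ m - 5 := by omega
  have h0 : ((m - 5 : ℤ) : ZMod 8) = 0 := (ZMod.intCast_zmod_eq_zero_iff_dvd _ _).mpr hdvd
  have hm8 : ((m : ℤ) : ZMod 8) = 5 := by
    push_cast at h0
    linear_combination h0
  have key : ∀ a b c : ZMod 8, a^2 + 2*b^2 + 2*c^2 + 2*b*c ≠ 5 := by decide
  apply key (x : ZMod 8) (y : ZMod 8) (z : ZMod 8)
  have := congrArg (fun t : ℤ => ((t : ZMod 8))) heq
  push_cast at this
  rw [hm8] at this
  exact this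

lemma construct_rep (m p e f g : ℤ) (hm : 0 < m) (hp : 0 < p)
    (he : m*e = 3*p + 9) (hg : 3*p*g = 3 + m*f^2) (h8 : m % 8 = 5) :
    ∃ x y z : ℤ, x^2 + y^2 + 3*z^2 = m := by
  have hdet : Tdet m e g 3 0 f = 3 := by
    unfold Tdet; linear_combination g*he + hg
  have hident : ∀ x y z : ℤ, 3*p*m * Tval m e g 3 0 f x y z
      = 3*p*(m*x+3*y)^2 + (3*p*y + m*f*z)^2 + 3*m*z^2 := by
    intro x y z; unfold Tval; linear_combination (3*p*y^2)*he + (m*z^2)*hg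
  have hpos : ∀ x y z : ℤ, ¬(x = 0 ∧ y = 0 ∧ z = 0) → 0 < Tval m e g 3 0 f x y z := by
    intro x y z hnz
    by_contra hle
    push_neg at hle
    have hid := hident x y z
    have t1 : 0 ≤ 3*p*(m*x+3*y)^2 := mul_nonneg (by omega) (sq_nonneg _)
    have t2 : 0 ≤ (3*p*y + m*f*z)^2 := sq_nonneg _
    have t3 : 0 ≤ 3*m*z^2 := mul_nonneg (by omega) (sq_nonneg _)
    have hrhs : 0 < 3*p*(m*x+3*y)^2 + (3*p*y + m*f*z)^2 + 3*m*z^2 := by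
      by_cases hz : z = 0
      · subst hz
        by_cases hy : y = 0
        · subst hy
          have hx : x ≠ 0 := by tauto
          have h1 : m*x + 3*0 ≠ 0 := by
            simp only [mul_zero, add_zero]
            exact mul_ne_zero (by omega) hx
          have h2 : 0 < (m*x+3*0)^2 :=
            lt_of_le_of_ne (sq_nonneg _) (Ne.symm (pow_ne_zero 2 h1))
          have h3 : 0 < 3*p := by omega
          have h4 : 0 < 3*p*(m*x+3*0)^2 := mul_pos h3 h2
          linarith [t2, t3, h4]
        · have h1 : 3*p*y + m*f*0 ≠ 0 := by
            simp only [mul_zero, add_zero]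
            exact mul_ne_zero (by omega) hy
          have h2 : 0 < (3*p*y + m*f*0)^2 :=
            lt_of_le_of_ne (sq_nonneg _) (Ne.symm (pow_ne_zero 2 h1))
          linarith [t1, t3, h2]
      · have h1 : 0 < z^2 := lt_of_le_of_ne (sq_nonneg _) (Ne.symm (pow_ne_zero 2 hz))
        have h2 : 0 < 3*m*z^2 := mul_pos (by omega) h1
        linarith [t1, t2, h2]
    have hmul : 3*p*m * Tval m e g 3 0 f x y z ≤ 0 :=
      mul_nonpos_iff.mpr (Or.inl ⟨mul_nonneg (by omega) (le_of_lt hm), hle⟩)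
    linarith [hid, hrhs, hmul]
  rcases ter_normalize m e g 3 0 f hpos hdet m ⟨1, 0, 0, by unfold Tval; ring⟩ with h | h
  · exact h
  · obtain ⟨x, y, z, hxyz⟩ := h
    exact absurd hxyz (H_mod8 x y z m h8)

/-- nat mod facts to int dvd -/
lemma natmod_to_dvd (p M : ℕ) (h : p % M = M - 3) (hM : 3 < M) : (M:ℤ) ∣ (p:ℤ) + 3 := by
  have h1 : p % M = (M-3) % M := by rw [h, Nat.mod_eq_of_lt (by omega)]
  have h2 : (p+3) % M = ((M-3)+3) % M := Nat.ModEq.add_right 3 h1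
  have h3 : (M-3)+3 = M := by omega
  rw [h3, Nat.mod_self] at h2
  have h4 : M ∣ p + 3 := Nat.dvd_of_mod_eq_zero h2
  have := Int.natCast_dvd_natCast.mpr h4
  push_cast at this
  exact this

theorem repr_113 (m : ℤ) (hm : 0 < m) (h8 : m % 8 = 5) (h9 : m % 3 = 0 → m % 9 = 3) :
    ∃ x y z : ℤ, x^2 + y^2 + 3*z^2 = m := by
  by_cases h3 : m % 3 = 0
  · -- case B : m = 3n
    have h93 : m % 9 = 3 := h9 h3
    obtain ⟨nz, hnz⟩ : ∃ n : ℤ, m = 3*n := ⟨m/3, by omega⟩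
    set N : ℕ := nz.toNat with hN
    have hNz : (N:ℤ) = nz := Int.toNat_of_nonneg (by omega)
    have hN2 : N % 2 = 1 := by omega
    have hN4 : N % 4 = 3 := by omega
    have hN3 : N % 3 = 1 := by omega
    have hNgt : 3 < N := by omega
    obtain ⟨p, hpp, hpgt, hp12, hpN⟩ :=
      exists_good_prime N 1 ((3*m).toNat) hN2 (by omega) hNgt (Or.inl rfl)
    haveI := Fact.mk hpp
    have hp4 : p % 4 = 1 := by omega
    have hpodd : Odd p := Nat.odd_iff.mpr (by omega)
    have hdvd3 : (N:ℤ) ∣ (p:ℤ) + 3 := natmod_to_dvd p N hpN hNgt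
    have hjac : jacobiSym (-(N:ℤ)) p = 1 :=
      jacobi_caseB N p hN2 hN4 hN3 hp4 hpodd hdvd3
    obtain ⟨s, hs⟩ : IsSquare ((-(N:ℤ) : ℤ) : ZMod p) :=
      ZMod.isSquare_of_jacobiSym_eq_one hjac
    have hppos : 0 < (p:ℤ) := by exact_mod_cast hpp.pos
    have hpgt' : 3*m < (p:ℤ) := by
      have : ((3*m).toNat : ℤ) < (p:ℤ) := by exact_mod_cast hpgt
      omega
    push_cast at hs
    have hsne : s ≠ 0 := by
      intro hs0
      rw [hs0, mul_zero] at hs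
      have h0 : ((N:ℕ) : ZMod p) = 0 := by linear_combination -hs
      have hdvd : p ∣ N := (ZMod.natCast_eq_zero_iff N p).mp h0
      have := Nat.le_of_dvd (by omega) hdvd
      omega
    have hst : s * s⁻¹ = 1 := mul_inv_cancel₀ hsne
    have hkey : ((1 + (N:ℤ)*((s⁻¹.val : ℕ):ℤ)^2 : ℤ) : ZMod p) = 0 := by
      push_cast
      rw [ZMod.natCast_rightInverse s⁻¹]
      have hNs : ((N:ℕ) : ZMod p) = -(s*s) := by linear_combination -hs
      rw [hNs]
      linear_combination (-(s*s⁻¹) - 1) * hst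
    obtain ⟨g, hgg⟩ : (p:ℤ) ∣ 1 + (N:ℤ)*((s⁻¹.val : ℕ):ℤ)^2 :=
      (ZMod.intCast_zmod_eq_zero_iff_dvd _ p).mp hkey
    obtain ⟨e₁, hee⟩ := hdvd3
    refine construct_rep m (p:ℤ) e₁ ((s⁻¹.val : ℕ):ℤ) g hm hppos ?_ ?_ h8
    · -- m * e₁ = 3p + 9
      have : m = 3*(N:ℤ) := by rw [hNz]; exact hnz
      rw [this]
      linear_combination (-3) * hee
    · -- 3 p g = 3 + m f²
      have hmN : m = 3*(N:ℤ) := by rw [hNz]; exact hnz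
      rw [hmN]
      linear_combination (-3) * hgg
  · -- case A : 3 ∤ m
    set M : ℕ := m.toNat with hM
    have hMz : (M:ℤ) = m := Int.toNat_of_nonneg (by omega)
    have hM2 : M % 2 = 1 := by omega
    have hM4 : M % 4 = 1 := by omega
    have hMgt : 3 < M := by omega
    have hM3 : M % 3 = 1 ∨ M % 3 = 2 := by omega
    obtain ⟨p, hpp, hpgt, hp12, hpM⟩ :=
      exists_good_prime M (if M % 3 = 1 then 1 else 5) ((3*m).toNat) hM2 (by omega) hMgt
        (by split <;> simp)
    haveI := Fact.mk hpp
    have hp4 : p % 4 = 1 := by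
      rcases hM3 with h | h <;> simp [h] at hp12 <;> omega
    have hp3 : p % 3 = M % 3 := by
      rcases hM3 with h | h <;> simp [h] at hp12 <;> omega
    have hpodd : Odd p := Nat.odd_iff.mpr (by omega)
    have hdvd3 : (M:ℤ) ∣ (p:ℤ) + 3 := natmod_to_dvd p M hpM hMgt
    have hjac : jacobiSym (-3*(M:ℤ)) p = 1 :=
      jacobi_caseA M p hM2 hM4 hM3 hMgt hp4 hpodd hp3 hdvd3
    obtain ⟨s, hs⟩ : IsSquare ((-3*(M:ℤ) : ℤ) : ZMod p) :=
      ZMod.isSquare_of_jacobiSym_eq_one hjac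
    have hppos : 0 < (p:ℤ) := by exact_mod_cast hpp.pos
    have hpgt' : 3*m < (p:ℤ) := by
      have : ((3*m).toNat : ℤ) < (p:ℤ) := by exact_mod_cast hpgt
      omega
    push_cast at hs
    have hsne : s ≠ 0 := by
      intro hs0
      rw [hs0, mul_zero] at hs
      have h0 : ((3*M : ℕ) : ZMod p) = 0 := by push_cast; linear_combination -hs
      have hdvd : p ∣ 3*M := (ZMod.natCast_eq_zero_iff (3*M) p).mp h0
      have := Nat.le_of_dvd (by omega) hdvd
      omega
    have hst : s * s⁻¹ = 1 := mul_inv_cancel₀ hsne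
    have hkey : ((1 + 3*(M:ℤ)*((s⁻¹.val : ℕ):ℤ)^2 : ℤ) : ZMod p) = 0 := by
      push_cast
      rw [ZMod.natCast_rightInverse s⁻¹]
      have hNs' : (3:ZMod p)*((M:ℕ) : ZMod p) = -(s*s) := by linear_combination -hs
      linear_combination (s⁻¹^2) * hNs' + (-(s*s⁻¹) - 1) * hst
    obtain ⟨g, hgg⟩ : (p:ℤ) ∣ 1 + 3*(M:ℤ)*((s⁻¹.val : ℕ):ℤ)^2 :=
      (ZMod.intCast_zmod_eq_zero_iff_dvd _ p).mp hkey
    obtain ⟨e₁, hee⟩ := hdvd3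
    refine construct_rep m (p:ℤ) (3*e₁) (3*((s⁻¹.val : ℕ):ℤ)) g hm hppos ?_ ?_ h8
    · rw [← hMz]
      linear_combination (-3) * hee
    · rw [← hMz]
      linear_combination (-3) * hgg


lemma sq_mod8 (x : ℤ) :
    (x % 2 = 1 ∧ x^2 % 8 = 1) ∨ (x % 4 = 0 ∧ x^2 % 8 = 0) ∨ (x % 4 = 2 ∧ x^2 % 8 = 4) := by
  obtain ⟨k, hk⟩ : ∃ k, x = 4*k + x % 4 := ⟨x/4, by omega⟩
  have h04 : x % 4 = 0 ∨ x % 4 = 1 ∨ x % 4 = 2 ∨ x % 4 = 3 := by omega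
  rcases h04 with h|h|h|h
  · rw [h] at hk
    have e : x^2 = 8*(2*k^2) + 0 := by rw [hk]; ring
    right; left; exact ⟨h, by omega⟩
  · rw [h] at hk
    have e : x^2 = 8*(2*k^2 + k) + 1 := by rw [hk]; ring
    left; exact ⟨by omega, by omega⟩
  · rw [h] at hk
    have e : x^2 = 8*(2*k^2 + 2*k) + 4 := by rw [hk]; ring
    right; right; exact ⟨h, by omega⟩
  · rw [h] at hk
    have e : x^2 = 8*(2*k^2 + 3*k + 1) + 1 := by rw [hk]; ring
    left; exact ⟨by omega, by omega⟩

lemma odd_rep (m x y z : ℤ) (h8 : m % 8 = 5) (h : x^2 + y^2 + 3*z^2 = m) :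
    ∃ u v w : ℤ, Odd u ∧ Odd v ∧ Odd w ∧ u^2 + v^2 + 3*w^2 = m := by
  rcases sq_mod8 x with ⟨hx1,hx2⟩|⟨hx1,hx2⟩|⟨hx1,hx2⟩ <;>
    rcases sq_mod8 y with ⟨hy1,hy2⟩|⟨hy1,hy2⟩|⟨hy1,hy2⟩ <;>
      rcases sq_mod8 z with ⟨hz1,hz2⟩|⟨hz1,hz2⟩|⟨hz1,hz2⟩ <;>
        try (exfalso; omega)
  · -- all odd
    exact ⟨x, y, z, Int.odd_iff.mpr hx1, Int.odd_iff.mpr hy1, Int.odd_iff.mpr hz1, h⟩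
  · -- x odd, y ≡ 0 (4), z ≡ 2 (4)
    obtain ⟨a, ha⟩ : ∃ a, y = 2*a := ⟨y/2, by omega⟩
    obtain ⟨b, hb⟩ : ∃ b, z = 2*b := ⟨z/2, by omega⟩
    refine ⟨x, a - 3*b, a + b, Int.odd_iff.mpr hx1, Int.odd_iff.mpr (by omega),
      Int.odd_iff.mpr (by omega), ?_⟩
    rw [ha, hb] at h
    linear_combination h
  · -- x odd, y ≡ 2 (4), z ≡ 0 (4)
    obtain ⟨a, ha⟩ : ∃ a, y = 2*a := ⟨y/2, by omega⟩
    obtain ⟨b, hb⟩ : ∃ b, z = 2*b := ⟨z/2, by omega⟩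
    refine ⟨x, a - 3*b, a + b, Int.odd_iff.mpr hx1, Int.odd_iff.mpr (by omega),
      Int.odd_iff.mpr (by omega), ?_⟩
    rw [ha, hb] at h
    linear_combination h
  · -- x ≡ 0 (4), y odd, z ≡ 2 (4)
    obtain ⟨a, ha⟩ : ∃ a, x = 2*a := ⟨x/2, by omega⟩
    obtain ⟨b, hb⟩ : ∃ b, z = 2*b := ⟨z/2, by omega⟩
    refine ⟨a - 3*b, y, a + b, Int.odd_iff.mpr (by omega), Int.odd_iff.mpr hy1,
      Int.odd_iff.mpr (by omega), ?_⟩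
    rw [ha, hb] at h
    linear_combination h
  · -- x ≡ 2 (4), y odd, z ≡ 0 (4)
    obtain ⟨a, ha⟩ : ∃ a, x = 2*a := ⟨x/2, by omega⟩
    obtain ⟨b, hb⟩ : ∃ b, z = 2*b := ⟨z/2, by omega⟩
    refine ⟨a - 3*b, y, a + b, Int.odd_iff.mpr (by omega), Int.odd_iff.mpr hy1,
      Int.odd_iff.mpr (by omega), ?_⟩
    rw [ha, hb] at h
    linear_combination h

lemma sq_mod3 (x : ℤ) : (x % 3 = 0 ∧ x^2 % 3 = 0) ∨ (x^2 % 3 = 1) := by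
  obtain ⟨k, hk⟩ : ∃ k, x = 3*k + x % 3 := ⟨x/3, by omega⟩
  have h03 : x % 3 = 0 ∨ x % 3 = 1 ∨ x % 3 = 2 := by omega
  rcases h03 with h|h|h
  · rw [h] at hk
    have e : x^2 = 3*(3*k^2) + 0 := by rw [hk]; ring
    left; exact ⟨h, by omega⟩
  · rw [h] at hk
    have e : x^2 = 3*(3*k^2 + 2*k) + 1 := by rw [hk]; ring
    right; omega
  · rw [h] at hk
    have e : x^2 = 3*(3*k^2 + 4*k + 1) + 1 := by rw [hk]; ring
    right; omega

/-- Every positive integer `k` with `k ≡ 7 (mod 8)`, `k ≡ 0` or `1 (mod 3)` and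
`k ≢ 0 (mod 9)` is represented as `k = x² + 3y² + 3z²` with `x, y, z` all odd. -/
theorem G_odd_representation_of_admissible (k : ℤ) (hk : 0 < k) (h8 : k % 8 = 7)
    (h3 : k % 3 = 0 ∨ k % 3 = 1) (h9 : k % 9 ≠ 0) :
    ∃ x y z : ℤ, Odd x ∧ Odd y ∧ Odd z ∧ x ^ 2 + 3 * y ^ 2 + 3 * z ^ 2 = k := by
  rcases h3 with h30 | h31
  · -- k = 3m
    obtain ⟨m, hm⟩ : ∃ m, k = 3*m := ⟨k/3, by omega⟩
    have hm8 : m % 8 = 5 := by omega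
    have hm9 : m % 3 = 0 → m % 9 = 3 := by omega
    obtain ⟨x, y, z, hrep⟩ := repr_113 m (by omega) hm8 hm9
    obtain ⟨u, v, w, hu, hv, hw, hrep'⟩ := odd_rep m x y z hm8 hrep
    refine ⟨3*w, u, v, ?_, hu, hv, ?_⟩
    · rw [Int.odd_iff] at hw ⊢; omega
    · rw [hm]; linear_combination 3 * hrep'
  · -- m = 3k
    have hm8 : (3*k) % 8 = 5 := by omega
    have hm9 : (3*k) % 3 = 0 → (3*k) % 9 = 3 := by omega
    obtain ⟨x, y, z, hrep⟩ := repr_113 (3*k) (by omega) hm8 hm9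
    obtain ⟨u, v, w, hu, hv, hw, hrep'⟩ := odd_rep (3*k) x y z hm8 hrep
    -- 3 ∣ u and 3 ∣ v
    have hu3 : u % 3 = 0 ∧ v % 3 = 0 := by
      rcases sq_mod3 u with ⟨h1, h2⟩ | h2 <;> rcases sq_mod3 v with ⟨h3', h4⟩ | h4 <;>
        rcases sq_mod3 w with ⟨h5, h6⟩ | h6 <;> first | exact ⟨h1, h3'⟩ | (exfalso; omega)
    obtain ⟨a, ha⟩ : ∃ a, u = 3*a := ⟨u/3, by omega⟩
    obtain ⟨b, hb⟩ : ∃ b, v = 3*b := ⟨v/3, by omega⟩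
    refine ⟨w, a, b, hw, ?_, ?_, ?_⟩
    · rw [Int.odd_iff] at hu ⊢; omega
    · rw [Int.odd_iff] at hv ⊢; omega
    · rw [ha, hb] at hrep'
      linarith [hrep']
end

section
/- For every integer m, if there exist integers x, y, z with x² + y² + 3z² = 4m, then there exist integers a, b, c with a² + b² + 3c² = m. In other words, the set of integers represented by Q₃ over ℤ is closed under division by 4. -/
/-!
Squares are `0` or `1` mod `4` according to parity, so `x² + y² + 3z² ≡ 0 (mod 4)` forces either
all of `x, y, z` even, in which case we halve them, or `z` and exactly one of `x, y` odd. In the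
latter case the odd pair, say `(y, z)`, is halved through the norm form of `ℤ[(1 + √-3)/2]`:
`y² + 3z² = ((y + 3z)/2)² + 3((y - z)/2)²`, and choosing the sign of `z` with `y ≡ z (mod 4)`
makes both halves even, so `y² + 3z²` is four times a value of `u² + 3v²`.
-/

theorem Int.parity_of_four_dvd_sq_add_sq_add_three_mul_sq {x y z : ℤ}
    (h : 4 ∣ x ^ 2 + y ^ 2 + 3 * z ^ 2) :
    (Even x ∧ Even y ∧ Even z) ∨ (Even x ∧ Odd y ∧ Odd z) ∨ (Odd x ∧ Even y ∧ Odd z) := by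
  have sq_emod (t : ℤ) : t % 2 = 0 ∧ t ^ 2 % 4 = 0 ∨ t % 2 = 1 ∧ t ^ 2 % 4 = 1 := by
    rcases Int.even_or_odd t with ht | ht
    · exact .inl ⟨Int.even_iff.mp ht,
        Int.emod_eq_zero_of_dvd (by simpa using pow_dvd_pow_of_dvd ht.two_dvd 2)⟩
    · exact .inr ⟨Int.odd_iff.mp ht, Int.sq_mod_four_eq_one_of_odd ht⟩
  simp only [Int.even_iff, Int.odd_iff]
  have := sq_emod x
  have := sq_emod y
  have := sq_emod z
  omega

theorem Int.exists_sq_add_three_mul_sq_eq_four_mul_of_four_dvd_sub {y z : ℤ} (h : 4 ∣ y - z) :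
    ∃ u v : ℤ, y ^ 2 + 3 * z ^ 2 = 4 * (u ^ 2 + 3 * v ^ 2) := by
  obtain ⟨k, hk⟩ := h
  exact ⟨z + k, k, by rw [show y = z + 4 * k by omega]; ring⟩

theorem Int.exists_sq_add_three_mul_sq_eq_four_mul_of_odd {y z : ℤ} (hy : Odd y) (hz : Odd z) :
    ∃ u v : ℤ, y ^ 2 + 3 * z ^ 2 = 4 * (u ^ 2 + 3 * v ^ 2) := by
  have : 4 ∣ y - z ∨ 4 ∣ y - -z := by
    rw [Int.odd_iff] at hy hz
    omega
  rcases this with h | h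
  · exact exists_sq_add_three_mul_sq_eq_four_mul_of_four_dvd_sub h
  · simpa only [even_two.neg_pow] using exists_sq_add_three_mul_sq_eq_four_mul_of_four_dvd_sub h

/-- The set of integers represented by `Q₃(x,y,z) = x² + y² + 3z²` over ℤ is closed
under division by `4`: if `4m` is represented, so is `m`. -/
theorem Q3_represents_of_represents_four_mul (m : ℤ)
    (h : ∃ x y z : ℤ, x ^ 2 + y ^ 2 + 3 * z ^ 2 = 4 * m) :
    ∃ a b c : ℤ, a ^ 2 + b ^ 2 + 3 * c ^ 2 = m := by
  obtain ⟨x, y, z, hxyz⟩ := h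
  rcases Int.parity_of_four_dvd_sq_add_sq_add_three_mul_sq ⟨m, hxyz⟩ with
    ⟨⟨p, rfl⟩, ⟨q, rfl⟩, ⟨r, rfl⟩⟩ | ⟨⟨p, rfl⟩, hy, hz⟩ | ⟨hx, ⟨q, rfl⟩, hz⟩
  · exact ⟨p, q, r, by linarith⟩
  · obtain ⟨u, v, huv⟩ := Int.exists_sq_add_three_mul_sq_eq_four_mul_of_odd hy hz
    exact ⟨p, u, v, by linarith⟩
  · obtain ⟨u, v, huv⟩ := Int.exists_sq_add_three_mul_sq_eq_four_mul_of_odd hx hz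
    exact ⟨q, u, v, by linarith⟩
end

section
/- For every integer n, if there exist rational numbers x, y, z with x² + y² + 3z² = n, then there exist a natural number r and integers x, y, z with x² + y² + 3z² = 4^r · n. That is, any rational representation by Q₃ yields an integer representation of n up to a power of 4. -/
/-- Balanced residue: for odd positive `m`, every integer is `m*q + r` with `2|r| < m`. -/
lemma Q3aux.balanced (m a : ℤ) (hodd : Odd m) (hpos : 0 < m) :
    ∃ q r : ℤ, a = m * q + r ∧ 2 * |r| < m := by
  have h0 : 0 ≤ a % m := Int.emod_nonneg a hpos.ne'
  have h1 : a % m < m := Int.emod_lt_of_pos a hpos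
  have hrec : m * (a / m) + a % m = a := Int.mul_ediv_add_emod a m
  rcases lt_or_ge (2 * (a % m)) m with hle | hlt
  · exact ⟨a / m, a % m, by linarith [hrec], by rwa [abs_of_nonneg h0]⟩
  · have hne : 2 * (a % m) ≠ m := by
      rintro hEq
      rcases hodd with ⟨k, hk⟩
      omega
    refine ⟨a / m + 1, a % m - m, by linarith [hrec], ?_⟩
    rw [abs_of_nonpos (by linarith)]
    omega

lemma Q3aux.balanced_unique {m u v : ℤ} (hdvd : m ∣ u - v)
    (hu : 2 * |u| < m) (hv : 2 * |v| < m) : u = v := by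
  have habs : |u - v| < m := by
    have h2 : |u - v| ≤ |u| + |v| := abs_sub u v
    linarith
  have := Int.eq_zero_of_abs_lt_dvd hdvd habs
  linarith [this]

lemma Q3aux.sq_bound {m r : ℤ} (h : 2*|r| ≤ m) : 4*r^2 ≤ m^2 := by
  nlinarith [sq_abs r, abs_nonneg r]

lemma Q3aux.quad_bound {m A B g : ℤ} (hA : 4*A^2 ≤ m^2 - 2*m + 1)
    (hB : 4*B^2 ≤ m^2 - 2*m + 1) (h6 : m^2 + 2*m - 1 ≤ 6*g^2)
    (h1 : 0 < m - 2*g) (h2 : 0 < 6*g - m) :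
    A^2 + B^2 + 3*(2*g - m)^2 < m^2 := by
  nlinarith [mul_pos h1 h2]

/-- The Aubry–Davenport–Cassels descent step. -/
lemma Q3aux.good_step (m x0 y0 z0 al be ga n : ℤ) (hm : 0 < m)
    (h : (m*x0+al)^2 + (m*y0+be)^2 + 3*(m*z0+ga)^2 = m^2*n)
    (hE : al^2 + be^2 + 3*ga^2 < m^2) :
    (∃ x y z : ℤ, x^2 + y^2 + 3*z^2 = n) ∨
    ∃ e x y z : ℤ, 0 < e ∧ e < m ∧ x^2 + y^2 + 3*z^2 = e^2*n := by
  have hdvd : m ∣ al^2 + be^2 + 3*ga^2 :=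
    ⟨m*n + m*(x0^2+y0^2+3*z0^2) - 2*(x0*(m*x0+al)+y0*(m*y0+be)+3*z0*(m*z0+ga)),
      by linear_combination h⟩
  obtain ⟨e, he⟩ := hdvd
  have hE0 : 0 ≤ al^2 + be^2 + 3*ga^2 := by positivity
  have he0 : 0 ≤ e := by nlinarith
  rcases (eq_or_lt_of_le he0).imp Eq.symm id with h0 | hpos
  · -- e = 0 : the point is integral
    have hz : al^2 + be^2 + 3*ga^2 = 0 := by linear_combination he + m*h0
    have hal : al = 0 := by nlinarith [sq_nonneg al, sq_nonneg be, sq_nonneg ga]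
    have hbe : be = 0 := by nlinarith [sq_nonneg al, sq_nonneg be, sq_nonneg ga]
    have hga : ga = 0 := by nlinarith [sq_nonneg al, sq_nonneg be, sq_nonneg ga]
    left
    refine ⟨x0, y0, z0, ?_⟩
    have hmain : m^2 * (x0^2 + y0^2 + 3*z0^2) = m^2 * n := by
      linear_combination h - 2*m*x0*hal - 2*m*y0*hbe - 6*m*z0*hga - al*hal - be*hbe - 3*ga*hga
    exact mul_left_cancel₀ (pow_ne_zero 2 hm.ne') hmain
  · -- 0 < e < m : descend
    have hlt : e < m := by nlinarith
    right
    refine ⟨e, e*x0 + (x0^2+y0^2+3*z0^2-n)*al, e*y0 + (x0^2+y0^2+3*z0^2-n)*be,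
      e*z0 + (x0^2+y0^2+3*z0^2-n)*ga, hpos, hlt, ?_⟩
    have hmain : m^2 * ((e*x0 + (x0^2+y0^2+3*z0^2-n)*al)^2
        + (e*y0 + (x0^2+y0^2+3*z0^2-n)*be)^2
        + 3*(e*z0 + (x0^2+y0^2+3*z0^2-n)*ga)^2) = m^2 * (e^2*n) := by
      linear_combination ((x0^2+y0^2+3*z0^2-n)*(al^2+be^2+3*ga^2)) * h
        - ((m*e + (al^2+be^2+3*ga^2))*(x0^2+y0^2+3*z0^2-n)
            + 2*m*(x0^2+y0^2+3*z0^2-n)*(x0*al+y0*be+3*z0*ga)) * he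
    exact mul_left_cancel₀ (pow_ne_zero 2 hm.ne') hmain

/-- Key lemma: an integral representation of `m² n` gives one of `4^r n`. -/
lemma Q3aux.key : ∀ M : ℕ, ∀ m a b c n : ℤ, m.natAbs = M → 0 < m →
    a^2 + b^2 + 3*c^2 = m^2*n →
    ∃ (r : ℕ) (x y z : ℤ), x^2 + y^2 + 3*z^2 = 4^r*n := by
  intro M
  induction M using Nat.strong_induction_on with
  | _ M ih =>
    intro m a b c n hM hm h
    rcases eq_or_lt_of_le (show (1:ℤ) ≤ m from hm) with h1 | h1
    · -- base case m = 1
      subst h1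
      exact ⟨0, a, b, c, by linear_combination h⟩
    rcases Int.even_or_odd m with ⟨k, hk⟩ | hodd
    · -- m even: pass to m/2 and 4n
      have hk0 : 0 < k := by omega
      have hkM : k.natAbs < M := by omega
      obtain ⟨r, x, y, z, hx⟩ := ih k.natAbs hkM k a b c (4*n) rfl hk0
        (by linear_combination h + n*(m + 2*k)*hk)
      exact ⟨r + 1, x, y, z, by linear_combination hx⟩
    · -- m odd, m > 1
      obtain ⟨x0, al, ha, hal⟩ := Q3aux.balanced m a hodd hm
      obtain ⟨y0, be, hb, hbe⟩ := Q3aux.balanced m b hodd hm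
      obtain ⟨z0, ga, hc, hga⟩ := Q3aux.balanced m c hodd hm
      subst ha; subst hb; subst hc
      rcases lt_or_ge (al^2 + be^2 + 3*ga^2) (m^2) with hgood | hbad
      · -- good case: direct descent
        rcases Q3aux.good_step m x0 y0 z0 al be ga n hm h hgood with
          ⟨x, y, z, hx⟩ | ⟨e, x, y, z, he0, helt, hx⟩
        · exact ⟨0, x, y, z, by linear_combination hx⟩
        · exact ih e.natAbs (by omega) e x y z n rfl he0 hx
      · -- bad case: double the point first
        have hal1 : 2*|al| ≤ m - 1 := by omega
        have hbe1 : 2*|be| ≤ m - 1 := by omega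
        have hga1 : 2*|ga| ≤ m - 1 := by omega
        have hal2 : 4*al^2 ≤ m^2 - 2*m + 1 := by
          have := Q3aux.sq_bound (m := m-1) (r := al) (by omega); linarith
        have hbe2 : 4*be^2 ≤ m^2 - 2*m + 1 := by
          have := Q3aux.sq_bound (m := m-1) (r := be) (by omega); linarith
        have h6 : m^2 + 2*m - 1 ≤ 6*ga^2 := by linarith
        have h4 : m < 4*|ga| := by
          by_contra h'
          push_neg at h'
          have h16 : 16*ga^2 ≤ m^2 := by
            have := Q3aux.sq_bound (m := m) (r := 2*ga) (by
              have : |2*ga| = 2*|ga| := by rw [abs_mul]; norm_num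
              omega); linarith
          linarith [sq_nonneg m]
        obtain ⟨p, al2, ha2, hal2'⟩ := Q3aux.balanced m (2*al) hodd hm
        obtain ⟨q, be2, hb2, hbe2'⟩ := Q3aux.balanced m (2*be) hodd hm
        have hal2sq : 4*al2^2 ≤ m^2 - 2*m + 1 := by
          have := Q3aux.sq_bound (m := m-1) (r := al2) (by omega); linarith
        have hbe2sq : 4*be2^2 ≤ m^2 - 2*m + 1 := by
          have := Q3aux.sq_bound (m := m-1) (r := be2) (by omega); linarith
        rcases le_or_gt 0 ga with hg | hg
        · -- ga ≥ 0 (in fact > 0); doubled z-residue is 2*ga - m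
          have hga' : |ga| = ga := abs_of_nonneg hg
          have hE2 : al2^2 + be2^2 + 3*(2*ga - m)^2 < m^2 :=
            Q3aux.quad_bound hal2sq hbe2sq h6 (by omega) (by omega)
          have hnew : (m*(2*x0+p)+al2)^2 + (m*(2*y0+q)+be2)^2
              + 3*(m*(2*z0+1)+(2*ga-m))^2 = m^2*(4*n) := by
            linear_combination 4*h - (m*(2*x0+p)+al2 + 2*(m*x0+al))*ha2
              - (m*(2*y0+q)+be2 + 2*(m*y0+be))*hb2
          rcases Q3aux.good_step m (2*x0+p) (2*y0+q) (2*z0+1) al2 be2 (2*ga-m) (4*n)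
              hm hnew hE2 with ⟨x, y, z, hx⟩ | ⟨e, x, y, z, he0, helt, hx⟩
          · exact ⟨1, x, y, z, by linear_combination hx⟩
          · obtain ⟨r, x', y', z', hx'⟩ := ih e.natAbs (by omega) e x y z (4*n) rfl he0 hx
            exact ⟨r + 1, x', y', z', by linear_combination hx'⟩
        · -- ga < 0; doubled z-residue is 2*ga + m
          have hga' : |ga| = -ga := abs_of_neg hg
          have hE2 : al2^2 + be2^2 + 3*(2*ga + m)^2 < m^2 := by
            have h' := Q3aux.quad_bound (g := -ga) hal2sq hbe2sq (by linarith)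
              (by omega) (by omega)
            have heq : (2*(-ga) - m)^2 = (2*ga + m)^2 := by ring
            rw [heq] at h'; exact h'
          have hnew : (m*(2*x0+p)+al2)^2 + (m*(2*y0+q)+be2)^2
              + 3*(m*(2*z0-1)+(2*ga+m))^2 = m^2*(4*n) := by
            linear_combination 4*h - (m*(2*x0+p)+al2 + 2*(m*x0+al))*ha2
              - (m*(2*y0+q)+be2 + 2*(m*y0+be))*hb2
          rcases Q3aux.good_step m (2*x0+p) (2*y0+q) (2*z0-1) al2 be2 (2*ga+m) (4*n)
              hm hnew hE2 with ⟨x, y, z, hx⟩ | ⟨e, x, y, z, he0, helt, hx⟩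
          · exact ⟨1, x, y, z, by linear_combination hx⟩
          · obtain ⟨r, x', y', z', hx'⟩ := ih e.natAbs (by omega) e x y z (4*n) rfl he0 hx
            exact ⟨r + 1, x', y', z', by linear_combination hx'⟩

/-- Any rational representation of an integer `n` by `Q₃(x,y,z) = x² + y² + 3z²`
yields an integral representation of `4^r · n` for some natural number `r`. -/
theorem Q3_integral_representation_up_to_power_of_four (n : ℤ)
    (h : ∃ x y z : ℚ, x ^ 2 + y ^ 2 + 3 * z ^ 2 = (n : ℚ)) :
    ∃ (r : ℕ) (x y z : ℤ), x ^ 2 + y ^ 2 + 3 * z ^ 2 = 4 ^ r * n := by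
  obtain ⟨x, y, z, hxyz⟩ := h
  have hdx : (0:ℤ) < (x.den : ℤ) := Int.natCast_pos.mpr x.pos
  have hdy : (0:ℤ) < (y.den : ℤ) := Int.natCast_pos.mpr y.pos
  have hdz : (0:ℤ) < (z.den : ℤ) := Int.natCast_pos.mpr z.pos
  have hx : (x.num : ℚ) = x * (x.den : ℚ) := by
    have h' := Rat.num_div_den x
    rw [div_eq_iff (by positivity : ((x.den:ℚ)) ≠ 0)] at h'
    exact h'
  have hy : (y.num : ℚ) = y * (y.den : ℚ) := by
    have h' := Rat.num_div_den y
    rw [div_eq_iff (by positivity : ((y.den:ℚ)) ≠ 0)] at h'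
    exact h'
  have hz : (z.num : ℚ) = z * (z.den : ℚ) := by
    have h' := Rat.num_div_den z
    rw [div_eq_iff (by positivity : ((z.den:ℚ)) ≠ 0)] at h'
    exact h'
  have hQ : ((x.num * (y.den:ℤ) * (z.den:ℤ) : ℤ) : ℚ)^2
      + (((x.den:ℤ) * y.num * (z.den:ℤ) : ℤ) : ℚ)^2
      + 3*(((x.den:ℤ) * (y.den:ℤ) * z.num : ℤ) : ℚ)^2
      = (((x.den:ℤ) * (y.den:ℤ) * (z.den:ℤ) : ℤ) : ℚ)^2 * (n : ℚ) := by
    push_cast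
    rw [hx, hy, hz]
    linear_combination ((x.den:ℚ) * (y.den:ℚ) * (z.den:ℚ))^2 * hxyz
  have hZ : (x.num * (y.den:ℤ) * (z.den:ℤ))^2 + ((x.den:ℤ) * y.num * (z.den:ℤ))^2
      + 3*((x.den:ℤ) * (y.den:ℤ) * z.num)^2
      = ((x.den:ℤ) * (y.den:ℤ) * (z.den:ℤ))^2 * n := by exact_mod_cast hQ
  exact Q3aux.key ((x.den:ℤ) * (y.den:ℤ) * (z.den:ℤ)).natAbs
    ((x.den:ℤ) * (y.den:ℤ) * (z.den:ℤ)) _ _ _ n rfl (by positivity) hZ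
end
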